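/- arXiv:2311.10563 — 7 statements merged into one kernel-verified Lean document; each statement's English description precedes it below -/
import Mathlib

section
/- Every positive integer flow on a DAG with a single source and single sink admits a flow decomposition into at most |E| − |V| + 2 weighted s-t paths. -/
structure FlowNet (V : Type) [Fintype V] [DecidableEq V] where
  E : V → V → Bool
  s : V
  t : V
  f : V → V → ℕ
  topo : V → ℕ
  topo_lt : ∀ u v : V, E u v → topo u < topo v
  f_pos : ∀ u v : V, E u v → 0 < f u v
  s_no_in : ∀ u : V, ¬ E u s
  t_no_out : ∀ w : V, ¬ E t w
  source_unique : ∀ v : V, v ≠ s → ∃ u : V, E u v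
  sink_unique : ∀ v : V, v ≠ t → ∃ w : V, E v w
  conservation : ∀ v : V, v ≠ s → v ≠ t →
      ∑ u ∈ Finset.univ.filter (fun u : V => E u v), f u v
        = ∑ w ∈ Finset.univ.filter (fun w : V => E v w), f v w

variable {V : Type} [Fintype V] [DecidableEq V]


/-- A (nonempty) directed path of the network, given as its list of edges. -/
def IsPath (N : FlowNet V) (p : List (V × V)) : Prop :=
  p ≠ [] ∧ (∀ e ∈ p, N.E e.1 e.2) ∧ List.Chain' (fun e e' : V × V => e.2 = e'.1) p

/-- An `s`-`t` path of the network. -/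
def IsSTPath (N : FlowNet V) (p : List (V × V)) : Prop :=
  IsPath N p ∧ (p.map Prod.fst).head? = some N.s ∧ (p.map Prod.snd).getLast? = some N.t

/-- A flow decomposition: a family of weighted `s`-`t` paths whose weight
superposition equals the flow on every edge. -/
def IsFD (N : FlowNet V) (D : List (List (V × V) × ℕ)) : Prop :=
  (∀ pw ∈ D, IsSTPath N pw.1 ∧ 0 < pw.2) ∧
  ∀ u v : V, N.E u v →
    (D.map (fun pw => if (u, v) ∈ pw.1 then pw.2 else 0)).sum = N.f u v

/-- A path is safe if every flow decomposition contains a path having it as a subpath. -/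
def Safe (N : FlowNet V) (P : List (V × V)) : Prop :=
  ∀ D, IsFD N D → ∃ pw ∈ D, P <:+: pw.1

open Finset in
/-- inflow of `g` into `v`. -/
def Inflow (N : FlowNet V) (g : V → V → ℕ) (v : V) : ℕ :=
  ∑ u ∈ Finset.univ.filter (fun u : V => N.E u v), g u v

open Finset in
def Outflow (N : FlowNet V) (g : V → V → ℕ) (v : V) : ℕ :=
  ∑ w ∈ Finset.univ.filter (fun w : V => N.E v w), g v w

/-- `g` satisfies conservation at internal nodes. -/
def Cons (N : FlowNet V) (g : V → V → ℕ) : Prop :=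
  ∀ v, v ≠ N.s → v ≠ N.t → Inflow N g v = Outflow N g v

open Finset in
/-- support edges -/
def SE (N : FlowNet V) (g : V → V → ℕ) : Finset (V × V) :=
  Finset.univ.filter (fun e : V × V => N.E e.1 e.2 ∧ 0 < g e.1 e.2)

open Finset in
/-- support vertices -/
def SV (N : FlowNet V) (g : V → V → ℕ) : Finset V :=
  Finset.univ.filter (fun v : V => ∃ u, (N.E u v ∧ 0 < g u v) ∨ (N.E v u ∧ 0 < g v u))

lemma mem_SE {N : FlowNet V} {g : V → V → ℕ} {e : V × V} :
    e ∈ SE N g ↔ N.E e.1 e.2 ∧ 0 < g e.1 e.2 := by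
  simp [SE]

lemma mem_SV {N : FlowNet V} {g : V → V → ℕ} {v : V} :
    v ∈ SV N g ↔ ∃ u, (N.E u v ∧ 0 < g u v) ∨ (N.E v u ∧ 0 < g v u) := by
  simp [SV]

lemma inflow_pos {N : FlowNet V} {g : V → V → ℕ} {u v : V}
    (he : N.E u v) (hg : 0 < g u v) : 0 < Inflow N g v := by
  classical
  refine lt_of_lt_of_le hg ?_
  exact Finset.single_le_sum (f := fun u => g u v) (fun _ _ => Nat.zero_le _)
    (by simp [he])

lemma outflow_pos {N : FlowNet V} {g : V → V → ℕ} {u v : V}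
    (he : N.E u v) (hg : 0 < g u v) : 0 < Outflow N g u := by
  classical
  refine lt_of_lt_of_le hg ?_
  exact Finset.single_le_sum (f := fun w => g u w) (fun _ _ => Nat.zero_le _)
    (by simp [he])

lemma exists_of_inflow_pos {N : FlowNet V} {g : V → V → ℕ} {v : V}
    (h : 0 < Inflow N g v) : ∃ u, N.E u v ∧ 0 < g u v := by
  classical
  by_contra hc
  push_neg at hc
  have : Inflow N g v = 0 := by
    refine Finset.sum_eq_zero ?_
    intro u hu
    simp only [Finset.mem_filter] at hu
    have := hc u hu.2
    omega
  omega

lemma exists_of_outflow_pos {N : FlowNet V} {g : V → V → ℕ} {v : V}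
    (h : 0 < Outflow N g v) : ∃ w, N.E v w ∧ 0 < g v w := by
  classical
  by_contra hc
  push_neg at hc
  have : Outflow N g v = 0 := by
    refine Finset.sum_eq_zero ?_
    intro u hu
    simp only [Finset.mem_filter] at hu
    have := hc u hu.2
    omega
  omega

lemma inflow_s_zero (N : FlowNet V) (g : V → V → ℕ) : Inflow N g N.s = 0 := by
  refine Finset.sum_eq_zero ?_
  intro u hu
  simp only [Finset.mem_filter] at hu
  exact absurd hu.2 (N.s_no_in u)

lemma outflow_t_zero (N : FlowNet V) (g : V → V → ℕ) : Outflow N g N.t = 0 := by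
  refine Finset.sum_eq_zero ?_
  intro u hu
  simp only [Finset.mem_filter] at hu
  exact absurd hu.2 (N.t_no_out u)

section Paths
variable {N : FlowNet V} {g : V → V → ℕ}

/-- Forward extension: from any vertex with positive inflow there is a
support path to `t`. -/
lemma fwd_aux (hcons : Cons N g) :
    ∀ n : ℕ, ∀ v : V,
      (Finset.univ.filter (fun w : V => N.topo v < N.topo w)).card ≤ n →
      0 < Inflow N g v →
      ∃ p : List (V × V), (∀ e ∈ p, N.E e.1 e.2 ∧ 0 < g e.1 e.2) ∧
        List.Chain' (fun e e' : V × V => e.2 = e'.1) p ∧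
        ((p = [] ∧ v = N.t) ∨
          ((p.map Prod.fst).head? = some v ∧ (p.map Prod.snd).getLast? = some N.t)) := by
  intro n
  induction n with
  | zero =>
    intro v hn hin
    by_cases hvt : v = N.t
    · exact ⟨[], by simp, by simp [List.Chain'], Or.inl ⟨rfl, hvt⟩⟩
    · exfalso
      have hvs : v ≠ N.s := by
        intro h; rw [h, inflow_s_zero] at hin; omega
      have hout : 0 < Outflow N g v := by
        rw [← hcons v hvs hvt]; exact hin
      obtain ⟨w, hw, hgw⟩ := exists_of_outflow_pos hout
      have : w ∈ Finset.univ.filter (fun w : V => N.topo v < N.topo w) := by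
        simp [N.topo_lt v w hw]
      have := Finset.card_pos.mpr ⟨w, this⟩
      omega
  | succ n ih =>
    intro v hn hin
    by_cases hvt : v = N.t
    · exact ⟨[], by simp, by simp [List.Chain'], Or.inl ⟨rfl, hvt⟩⟩
    · have hvs : v ≠ N.s := by
        intro h; rw [h, inflow_s_zero] at hin; omega
      have hout : 0 < Outflow N g v := by
        rw [← hcons v hvs hvt]; exact hin
      obtain ⟨w, hw, hgw⟩ := exists_of_outflow_pos hout
      have hmono : (Finset.univ.filter (fun x : V => N.topo w < N.topo x)).card ≤ n := by
        have hsub : Finset.univ.filter (fun x : V => N.topo w < N.topo x) ⊆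
            (Finset.univ.filter (fun x : V => N.topo v < N.topo x)).erase w := by
          intro x hx
          simp only [Finset.mem_filter, Finset.mem_univ, true_and] at hx
          have htv := N.topo_lt v w hw
          rw [Finset.mem_erase]
          refine ⟨?_, by simp only [Finset.mem_filter, Finset.mem_univ, true_and]; omega⟩
          rintro rfl; omega
        have h1 := Finset.card_le_card hsub
        have hwmem : w ∈ Finset.univ.filter (fun x : V => N.topo v < N.topo x) := by
          simp [N.topo_lt v w hw]
        have h2 := Finset.card_erase_of_mem hwmem
        have h3 := Finset.card_pos.mpr ⟨w, hwmem⟩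
        omega
      have hinw : 0 < Inflow N g w := inflow_pos hw hgw
      obtain ⟨p, hpE, hpc, hpend⟩ := ih w hmono hinw
      refine ⟨(v, w) :: p, ?_, ?_, ?_⟩
      · intro e he
        rcases List.mem_cons.mp he with rfl | he
        · exact ⟨hw, hgw⟩
        · exact hpE e he
      · refine List.isChain_cons.mpr ⟨?_, hpc⟩
        intro b hb
        rcases hpend with ⟨rfl, _⟩ | ⟨hh, _⟩
        · simp at hb
        · rcases p with _ | ⟨x, xs⟩
          · simp at hh
          · simp only [List.head?_cons, Option.mem_def, Option.some.injEq] at hb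
            subst hb
            simp only [List.map_cons, List.head?_cons, Option.some.injEq] at hh
            exact hh.symm
      · right
        rcases hpend with ⟨rfl, rfl⟩ | ⟨hh, hl⟩
        · simp
        · rcases p with _ | ⟨x, xs⟩
          · simp at hh
          · refine ⟨by simp, ?_⟩
            simp only [List.map_cons] at hl ⊢
            rw [List.getLast?_cons_cons]
            exact hl
end Paths

section Paths2
variable {N : FlowNet V} {g : V → V → ℕ}

/-- Backward extension: from any vertex with positive outflow there is a
support path from `s`. -/
lemma bwd_aux (hcons : Cons N g) :
    ∀ n : ℕ, ∀ v : V,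
      (Finset.univ.filter (fun w : V => N.topo w < N.topo v)).card ≤ n →
      0 < Outflow N g v →
      ∃ p : List (V × V), (∀ e ∈ p, N.E e.1 e.2 ∧ 0 < g e.1 e.2) ∧
        List.Chain' (fun e e' : V × V => e.2 = e'.1) p ∧
        ((p = [] ∧ v = N.s) ∨
          ((p.map Prod.fst).head? = some N.s ∧ (p.map Prod.snd).getLast? = some v)) := by
  intro n
  induction n with
  | zero =>
    intro v hn hout
    by_cases hvs : v = N.s
    · exact ⟨[], by simp, by simp [List.Chain'], Or.inl ⟨rfl, hvs⟩⟩
    · exfalso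
      have hvt : v ≠ N.t := by
        intro h; rw [h, outflow_t_zero] at hout; omega
      have hin : 0 < Inflow N g v := by
        rw [hcons v hvs hvt]; exact hout
      obtain ⟨u, hu, hgu⟩ := exists_of_inflow_pos hin
      have : u ∈ Finset.univ.filter (fun w : V => N.topo w < N.topo v) := by
        simp [N.topo_lt u v hu]
      have := Finset.card_pos.mpr ⟨u, this⟩
      omega
  | succ n ih =>
    intro v hn hout
    by_cases hvs : v = N.s
    · exact ⟨[], by simp, by simp [List.Chain'], Or.inl ⟨rfl, hvs⟩⟩
    · have hvt : v ≠ N.t := by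
        intro h; rw [h, outflow_t_zero] at hout; omega
      have hin : 0 < Inflow N g v := by
        rw [hcons v hvs hvt]; exact hout
      obtain ⟨u, hu, hgu⟩ := exists_of_inflow_pos hin
      have hmono : (Finset.univ.filter (fun x : V => N.topo x < N.topo u)).card ≤ n := by
        have hsub : Finset.univ.filter (fun x : V => N.topo x < N.topo u) ⊆
            (Finset.univ.filter (fun x : V => N.topo x < N.topo v)).erase u := by
          intro x hx
          simp only [Finset.mem_filter, Finset.mem_univ, true_and] at hx
          have htv := N.topo_lt u v hu
          rw [Finset.mem_erase]
          refine ⟨?_, by simp only [Finset.mem_filter, Finset.mem_univ, true_and]; omega⟩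
          rintro rfl; omega
        have h1 := Finset.card_le_card hsub
        have hwmem : u ∈ Finset.univ.filter (fun x : V => N.topo x < N.topo v) := by
          simp [N.topo_lt u v hu]
        have h2 := Finset.card_erase_of_mem hwmem
        have h3 := Finset.card_pos.mpr ⟨u, hwmem⟩
        omega
      have houtu : 0 < Outflow N g u := outflow_pos hu hgu
      obtain ⟨p, hpE, hpc, hpend⟩ := ih u hmono houtu
      refine ⟨p ++ [(u, v)], ?_, ?_, ?_⟩
      · intro e he
        rcases List.mem_append.mp he with he | he
        · exact hpE e he
        · rcases List.mem_singleton.mp he with rfl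
          exact ⟨hu, hgu⟩
      · simp only [List.Chain']; rw [List.isChain_append]
        refine ⟨hpc, by simp, ?_⟩
        intro x hx y hy
        simp only [List.head?_cons, Option.mem_def, Option.some.injEq] at hy
        subst hy
        rcases hpend with ⟨rfl, _⟩ | ⟨_, hl⟩
        · simp at hx
        · rw [List.getLast?_map] at hl
          rw [Option.mem_def] at hx
          rw [hx] at hl
          simpa using hl
      · right
        rcases hpend with ⟨rfl, rfl⟩ | ⟨hh, hl⟩
        · simp
        · constructor
          · rcases p with _ | ⟨x, xs⟩
            · simp at hh
            · simpa using hh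
          · simp only [List.map_append, List.map_cons, List.map_nil]
            rw [show (List.map Prod.snd p ++ [v]) = (List.map Prod.snd p).concat v by
              simp [List.concat_eq_append]]
            simp
end Paths2

section STP
variable {N : FlowNet V} {g : V → V → ℕ}

/-- From any support edge we get a full `s`-`t` support path. -/
lemma exists_support_STPath (hcons : Cons N g) {a b : V}
    (hab : N.E a b) (hg : 0 < g a b) :
    ∃ P : List (V × V), IsSTPath N P ∧ ∀ e ∈ P, N.E e.1 e.2 ∧ 0 < g e.1 e.2 := by
  obtain ⟨pS, hSE, hSc, hSend⟩ := bwd_aux hcons _ a le_rfl (outflow_pos hab hg)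
  obtain ⟨pT, hTE, hTc, hTend⟩ := fwd_aux hcons _ b le_rfl (inflow_pos hab hg)
  refine ⟨pS ++ (a, b) :: pT, ⟨⟨by simp, ?_, ?_⟩, ?_, ?_⟩, ?_⟩
  · intro e he
    rcases List.mem_append.mp he with he | he
    · exact (hSE e he).1
    · rcases List.mem_cons.mp he with rfl | he
      · exact hab
      · exact (hTE e he).1
  · simp only [List.Chain']; rw [List.isChain_append]
    refine ⟨hSc, ?_, ?_⟩
    · refine List.isChain_cons.mpr ⟨?_, hTc⟩
      intro y hy
      rcases hTend with ⟨rfl, _⟩ | ⟨hh, _⟩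
      · simp at hy
      · rcases pT with _ | ⟨x, xs⟩
        · simp at hh
        · simp only [List.head?_cons, Option.mem_def, Option.some.injEq] at hy
          subst hy
          simp only [List.map_cons, List.head?_cons, Option.some.injEq] at hh
          exact hh.symm
    · intro x hx y hy
      simp only [List.head?_cons, Option.mem_def, Option.some.injEq] at hy
      subst hy
      rcases hSend with ⟨rfl, _⟩ | ⟨_, hl⟩
      · simp at hx
      · rw [List.getLast?_map] at hl
        rw [Option.mem_def] at hx
        rw [hx] at hl
        simpa using hl
  · rcases hSend with ⟨rfl, rfl⟩ | ⟨hh, _⟩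
    · simp
    · rcases pS with _ | ⟨x, xs⟩
      · simp at hh
      · simpa using hh
  · rcases hTend with ⟨rfl, rfl⟩ | ⟨hh, hl⟩
    · simp only [List.map_append, List.map_cons, List.map_nil]
      rw [show (List.map Prod.snd pS ++ [N.t]) = (List.map Prod.snd pS).concat N.t by
        simp [List.concat_eq_append]]
      simp
    · rcases pT with _ | ⟨x, xs⟩
      · simp at hh
      · simp only [List.map_append, List.map_cons]
        rw [List.getLast?_append_of_ne_nil (l₁ := List.map Prod.snd pS) (by simp)]
        rw [List.getLast?_cons_cons] at *
        simpa using hl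
  · intro e he
    rcases List.mem_append.mp he with he | he
    · exact hSE e he
    · rcases List.mem_cons.mp he with rfl | he
      · exact ⟨hab, hg⟩
      · exact hTE e he
end STP

section PathStruct
variable {N : FlowNet V}

lemma chain'_topo (p : List (V × V)) (hE : ∀ e ∈ p, N.E e.1 e.2)
    (hc : List.Chain' (fun e e' : V × V => e.2 = e'.1) p) :
    List.Chain' (fun e e' : V × V => N.topo e.2 < N.topo e'.2) p := by
  induction p with
  | nil => simp [List.Chain']
  | cons x xs ih =>
    rcases xs with _ | ⟨y, ys⟩
    · simp [List.Chain']
    · simp only [List.Chain'] at hc ⊢; rw [List.isChain_cons_cons] at hc ⊢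
      refine ⟨?_, ih (fun e he => hE e (List.mem_cons_of_mem _ he)) hc.2⟩
      have hy := N.topo_lt y.1 y.2 (hE y (by simp))
      rw [hc.1]; exact hy

lemma chain'_topo_fst (p : List (V × V)) (hE : ∀ e ∈ p, N.E e.1 e.2)
    (hc : List.Chain' (fun e e' : V × V => e.2 = e'.1) p) :
    List.Chain' (fun e e' : V × V => N.topo e.1 < N.topo e'.1) p := by
  induction p with
  | nil => simp [List.Chain']
  | cons x xs ih =>
    rcases xs with _ | ⟨y, ys⟩
    · simp [List.Chain']
    · simp only [List.Chain'] at hc ⊢; rw [List.isChain_cons_cons] at hc ⊢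
      refine ⟨?_, ih (fun e he => hE e (List.mem_cons_of_mem _ he)) hc.2⟩
      have hy := N.topo_lt x.1 x.2 (hE x (by simp))
      rw [hc.1] at hy; exact hy

lemma snd_injOn (p : List (V × V)) (hE : ∀ e ∈ p, N.E e.1 e.2)
    (hc : List.Chain' (fun e e' : V × V => e.2 = e'.1) p) :
    ∀ e ∈ p, ∀ e' ∈ p, e.2 = e'.2 → e = e' := by
  haveI : IsTrans (V × V) (fun e e' : V × V => N.topo e.2 < N.topo e'.2) :=
    ⟨fun _ _ _ h h' => lt_trans h h'⟩
  have hpw := List.isChain_iff_pairwise.mp (chain'_topo p hE hc)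
  have hne := hpw.imp (fun h => by intro h2; rw [h2] at h; exact lt_irrefl _ h :
    ∀ {a b : V × V}, N.topo a.2 < N.topo b.2 → a.2 ≠ b.2)
  intro e he e' he' h2
  by_contra hcon
  exact (haveI : Std.Symm (fun a b : V × V => a.2 ≠ b.2) := ⟨fun _ _ h => fun h2 => h h2.symm⟩
    List.Pairwise.forall hne he he' hcon h2)

lemma fst_injOn (p : List (V × V)) (hE : ∀ e ∈ p, N.E e.1 e.2)
    (hc : List.Chain' (fun e e' : V × V => e.2 = e'.1) p) :
    ∀ e ∈ p, ∀ e' ∈ p, e.1 = e'.1 → e = e' := by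
  haveI : IsTrans (V × V) (fun e e' : V × V => N.topo e.1 < N.topo e'.1) :=
    ⟨fun _ _ _ h h' => lt_trans h h'⟩
  have hpw := List.isChain_iff_pairwise.mp (chain'_topo_fst p hE hc)
  have hne := hpw.imp (fun h => by intro h2; rw [h2] at h; exact lt_irrefl _ h :
    ∀ {a b : V × V}, N.topo a.1 < N.topo b.1 → a.1 ≠ b.1)
  intro e he e' he' h2
  by_contra hcon
  exact (haveI : Std.Symm (fun a b : V × V => a.1 ≠ b.1) := ⟨fun _ _ h => fun h2 => h h2.symm⟩
    List.Pairwise.forall hne he he' hcon h2)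

/-- Every edge of a chain whose first vertex is not the head vertex has a predecessor. -/
lemma exists_pred :
    ∀ (p : List (V × V)) (v₀ : V), List.Chain' (fun e e' : V × V => e.2 = e'.1) p →
      ∀ e ∈ p, (p.map Prod.fst).head? = some v₀ →
      e.1 = v₀ ∨ ∃ e' ∈ p, e'.2 = e.1 := by
  intro p
  induction p with
  | nil => intro v₀ _ e he; simp at he
  | cons x xs ih =>
    intro v₀ hc e he hh
    simp only [List.map_cons, List.head?_cons, Option.some.injEq] at hh
    rcases List.mem_cons.mp he with rfl | he
    · left; exact hh
    · rcases xs with _ | ⟨y, ys⟩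
      · simp at he
      · simp only [List.Chain'] at hc; rw [List.isChain_cons_cons] at hc
        rcases ih y.1 hc.2 e he (by simp) with h | ⟨e', he', h⟩
        · right; exact ⟨x, by simp, by rw [h, hc.1]⟩
        · right; exact ⟨e', List.mem_cons_of_mem _ he', h⟩

/-- Every edge of a chain whose second vertex is not the last vertex has a successor. -/
lemma exists_succ :
    ∀ (p : List (V × V)) (v₁ : V), List.Chain' (fun e e' : V × V => e.2 = e'.1) p →
      ∀ e ∈ p, (p.map Prod.snd).getLast? = some v₁ →
      e.2 = v₁ ∨ ∃ e' ∈ p, e'.1 = e.2 := by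
  intro p
  induction p with
  | nil => intro v₁ _ e he; simp at he
  | cons x xs ih =>
    intro v₁ hc e he hl
    rcases xs with _ | ⟨y, ys⟩
    · rcases List.mem_cons.mp he with rfl | he
      · left; simpa using hl
      · simp at he
    · simp only [List.Chain'] at hc; rw [List.isChain_cons_cons] at hc
      simp only [List.map_cons] at hl
      rw [List.getLast?_cons_cons] at hl
      rcases List.mem_cons.mp he with rfl | he
      · right; exact ⟨y, by simp, hc.1.symm⟩
      · rcases ih v₁ hc.2 e he (by simpa using hl) with h | ⟨e', he', h⟩
        · left; exact h
        · right; exact ⟨e', List.mem_cons_of_mem _ he', h⟩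
end PathStruct

section Subtract
variable {N : FlowNet V} {g : V → V → ℕ}

lemma sum_ite_in (P : List (V × V)) (hE : ∀ e ∈ P, N.E e.1 e.2)
    (hinj : ∀ e ∈ P, ∀ e' ∈ P, e.2 = e'.2 → e = e') (w : ℕ) (v : V) :
    ∑ u ∈ Finset.univ.filter (fun u : V => N.E u v), (if (u, v) ∈ P then w else 0)
      = if ∃ e ∈ P, e.2 = v then w else 0 := by
  by_cases h : ∃ e ∈ P, e.2 = v
  · obtain ⟨e₀, he₀, hv⟩ := h
    have he₀' : e₀ = (e₀.1, v) := by rw [← hv]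
    rw [if_pos ⟨e₀, he₀, hv⟩]
    rw [Finset.sum_eq_single e₀.1]
    · rw [if_pos (he₀' ▸ he₀)]
    · intro b hb hbne
      rw [if_neg]
      intro hmem
      exact hbne (congrArg Prod.fst (hinj (b, v) hmem e₀ he₀ (by simp [hv])) )
    · intro hno
      exfalso
      exact hno (by simp [hE e₀ he₀, he₀' ▸ hE e₀ he₀])
  · rw [if_neg h]
    refine Finset.sum_eq_zero fun u hu => ?_
    rw [if_neg]
    intro hmem
    exact h ⟨(u, v), hmem, rfl⟩

lemma sum_ite_out (P : List (V × V)) (hE : ∀ e ∈ P, N.E e.1 e.2)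
    (hinj : ∀ e ∈ P, ∀ e' ∈ P, e.1 = e'.1 → e = e') (w : ℕ) (v : V) :
    ∑ u ∈ Finset.univ.filter (fun u : V => N.E v u), (if (v, u) ∈ P then w else 0)
      = if ∃ e ∈ P, e.1 = v then w else 0 := by
  by_cases h : ∃ e ∈ P, e.1 = v
  · obtain ⟨e₀, he₀, hv⟩ := h
    have he₀' : e₀ = (v, e₀.2) := by rw [← hv]
    rw [if_pos ⟨e₀, he₀, hv⟩]
    rw [Finset.sum_eq_single e₀.2]
    · rw [if_pos (he₀' ▸ he₀)]
    · intro b hb hbne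
      rw [if_neg]
      intro hmem
      exact hbne (congrArg Prod.snd (hinj (v, b) hmem e₀ he₀ (by simp [hv])) )
    · intro hno
      exfalso
      exact hno (by simp [he₀' ▸ hE e₀ he₀])
  · rw [if_neg h]
    refine Finset.sum_eq_zero fun u hu => ?_
    rw [if_neg]
    intro hmem
    exact h ⟨(v, u), hmem, rfl⟩

lemma inflow_sub (P : List (V × V)) (hE : ∀ e ∈ P, N.E e.1 e.2)
    (hinj : ∀ e ∈ P, ∀ e' ∈ P, e.2 = e'.2 → e = e') {w : ℕ}
    (hw : ∀ e ∈ P, w ≤ g e.1 e.2) (v : V) :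
    Inflow N g v =
      Inflow N (fun u v => g u v - if (u, v) ∈ P then w else 0) v
        + (if ∃ e ∈ P, e.2 = v then w else 0) := by
  rw [← sum_ite_in P hE hinj w v, Inflow, Inflow, ← Finset.sum_add_distrib]
  refine Finset.sum_congr rfl fun u hu => ?_
  by_cases hm : (u, v) ∈ P
  · have : w ≤ g u v := hw (u, v) hm
    simp only [if_pos hm]
    omega
  · simp [hm]

lemma outflow_sub (P : List (V × V)) (hE : ∀ e ∈ P, N.E e.1 e.2)
    (hinj : ∀ e ∈ P, ∀ e' ∈ P, e.1 = e'.1 → e = e') {w : ℕ}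
    (hw : ∀ e ∈ P, w ≤ g e.1 e.2) (v : V) :
    Outflow N g v =
      Outflow N (fun u v => g u v - if (u, v) ∈ P then w else 0) v
        + (if ∃ e ∈ P, e.1 = v then w else 0) := by
  rw [← sum_ite_out P hE hinj w v, Outflow, Outflow, ← Finset.sum_add_distrib]
  refine Finset.sum_congr rfl fun u hu => ?_
  by_cases hm : (v, u) ∈ P
  · have : w ≤ g v u := hw (v, u) hm
    simp only [if_pos hm]
    omega
  · simp [hm]

lemma cons_sub (hcons : Cons N g) {P : List (V × V)} (hP : IsSTPath N P)
    {w : ℕ} (hw : ∀ e ∈ P, w ≤ g e.1 e.2) :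
    Cons N (fun u v => g u v - if (u, v) ∈ P then w else 0) := by
  obtain ⟨⟨hne, hE, hc⟩, hh, hl⟩ := hP
  intro v hvs hvt
  have h1 := inflow_sub (g := g) P hE (snd_injOn P hE hc) hw v
  have h2 := outflow_sub (g := g) P hE (fst_injOn P hE hc) hw v
  have hiff : (∃ e ∈ P, e.2 = v) ↔ (∃ e ∈ P, e.1 = v) := by
    constructor
    · rintro ⟨e, he, rfl⟩
      rcases exists_succ P N.t hc e he hl with h | ⟨e', he', h⟩
      · exact absurd h hvt
      · exact ⟨e', he', h⟩
    · rintro ⟨e, he, rfl⟩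
      rcases exists_pred P N.s hc e he hh with h | ⟨e', he', h⟩
      · exact absurd h hvs
      · exact ⟨e', he', h⟩
  have hco := hcons v hvs hvt
  rw [h1, h2] at hco
  by_cases hcase : ∃ e ∈ P, e.2 = v
  · rw [if_pos hcase, if_pos (hiff.mp hcase)] at hco
    omega
  · rw [if_neg hcase, if_neg (fun h => hcase (hiff.mpr h))] at hco
    omega
end Subtract

section Count
variable {N : FlowNet V} {g g' : V → V → ℕ}

lemma s_mem_SV (hcons : Cons N g) (hne : (SE N g).Nonempty) : N.s ∈ SV N g := by
  obtain ⟨⟨a, b⟩, hab⟩ := hne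
  rw [mem_SE] at hab
  obtain ⟨p, hpE, hpc, hpend⟩ :=
    bwd_aux hcons _ a le_rfl (outflow_pos hab.1 hab.2)
  rcases hpend with ⟨rfl, rfl⟩ | ⟨hh, _⟩
  · exact mem_SV.mpr ⟨b, Or.inr hab⟩
  · rcases p with _ | ⟨x, xs⟩
    · simp at hh
    · simp only [List.map_cons, List.head?_cons, Option.some.injEq] at hh
      have hx := hpE x (by simp)
      exact mem_SV.mpr ⟨x.2, Or.inr (by rw [← hh]; exact hx)⟩

lemma t_mem_SV (hcons : Cons N g) (hne : (SE N g).Nonempty) : N.t ∈ SV N g := by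
  obtain ⟨⟨a, b⟩, hab⟩ := hne
  rw [mem_SE] at hab
  obtain ⟨p, hpE, hpc, hpend⟩ :=
    fwd_aux hcons _ b le_rfl (inflow_pos hab.1 hab.2)
  rcases hpend with ⟨rfl, rfl⟩ | ⟨_, hl⟩
  · exact mem_SV.mpr ⟨a, Or.inl hab⟩
  · rw [List.getLast?_map] at hl
    rcases hx : p.getLast? with _ | e
    · rw [hx] at hl; simp at hl
    · rw [hx] at hl
      simp only [Option.map_some, Option.some.injEq] at hl
      have he := hpE e (List.mem_of_getLast? hx)
      exact mem_SV.mpr ⟨e.1, Or.inl (by rw [← hl]; exact he)⟩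

/-- A support vertex other than `t` has an out-edge in the support. -/
lemma out_edge_of_mem_SV (hcons : Cons N g) {v : V} (hv : v ∈ SV N g)
    (hvt : v ≠ N.t) : ∃ u, N.E v u ∧ 0 < g v u := by
  rw [mem_SV] at hv
  obtain ⟨u, hu | hu⟩ := hv
  · have hvs : v ≠ N.s := by
      rintro rfl; exact N.s_no_in u hu.1
    have : 0 < Outflow N g v := by
      rw [← hcons v hvs hvt]; exact inflow_pos hu.1 hu.2
    exact exists_of_outflow_pos this
  · exact ⟨u, hu⟩

/-- A support vertex other than `s` has an in-edge in the support. -/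
lemma in_edge_of_mem_SV (hcons : Cons N g) {v : V} (hv : v ∈ SV N g)
    (hvs : v ≠ N.s) : ∃ u, N.E u v ∧ 0 < g u v := by
  rw [mem_SV] at hv
  obtain ⟨u, hu | hu⟩ := hv
  · exact ⟨u, hu⟩
  · have hvt : v ≠ N.t := by
      rintro rfl; exact N.t_no_out u hu.1
    have : 0 < Inflow N g v := by
      rw [hcons v hvs hvt]; exact outflow_pos hu.1 hu.2
    exact exists_of_inflow_pos this

/-- Support-vertex count is at most support-edge count plus one. -/
lemma sv_card_le (hcons : Cons N g) : (SV N g).card ≤ (SE N g).card + 1 := by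
  classical
  set pick : V → V × V := fun v =>
    if h : ∃ u, N.E v u ∧ 0 < g v u then (v, h.choose) else (v, v) with hpick
  have hmain : ((SV N g).erase N.t).card ≤ (SE N g).card := by
    refine Finset.card_le_card_of_injOn pick ?_ ?_
    · intro v hv
      have hvt := Finset.ne_of_mem_erase hv
      have hv' := Finset.mem_of_mem_erase hv
      have h : ∃ u, N.E v u ∧ 0 < g v u := out_edge_of_mem_SV hcons hv' hvt
      rw [hpick]
      simp only [dif_pos h]
      exact mem_SE.mpr ⟨h.choose_spec.1, h.choose_spec.2⟩
    · intro a _ b _ hab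
      have h1 : (pick a).1 = a := by rw [hpick]; simp only []; split <;> rfl
      have h2 : (pick b).1 = b := by rw [hpick]; simp only []; split <;> rfl
      rw [← h1, ← h2, hab]
  have h2 : (SV N g).card ≤ ((SV N g).erase N.t).card + 1 := by
    by_cases ht : N.t ∈ SV N g
    · rw [Finset.card_erase_of_mem ht]
      have := Finset.card_pos.mpr ⟨N.t, ht⟩
      omega
    · rw [Finset.erase_eq_of_notMem ht]; omega
  omega
end Count

section Count2
variable {N : FlowNet V} {g g' : V → V → ℕ}

/-- The key counting lemma: removing support edges removes strictly fewer
vertices than edges. -/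
lemma count_lemma (hg : Cons N g) (hg' : Cons N g')
    (hle : ∀ u v, g' u v ≤ g u v) (hne' : (SE N g').Nonempty)
    (hrem : ((SE N g) \ (SE N g')).Nonempty) :
    (SE N g').card + (SV N g).card + 1 ≤ (SE N g).card + (SV N g').card := by
  classical
  have hSEsub : SE N g' ⊆ SE N g := by
    intro e he
    rw [mem_SE] at he ⊢
    exact ⟨he.1, lt_of_lt_of_le he.2 (hle _ _)⟩
  have hSVsub : SV N g' ⊆ SV N g := by
    intro v hv
    rw [mem_SV] at hv ⊢
    obtain ⟨u, hu | hu⟩ := hv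
    · exact ⟨u, Or.inl ⟨hu.1, lt_of_lt_of_le hu.2 (hle _ _)⟩⟩
    · exact ⟨u, Or.inr ⟨hu.1, lt_of_lt_of_le hu.2 (hle _ _)⟩⟩
  obtain ⟨estar, hestar, hmax⟩ :=
    Finset.exists_max_image ((SE N g) \ (SE N g')) (fun e => N.topo e.2) hrem
  have hbmem : estar.2 ∈ SV N g' := by
    by_contra hb
    rw [Finset.mem_sdiff, mem_SE] at hestar
    have hbs : estar.2 ≠ N.s := fun h => N.s_no_in estar.1 (h ▸ hestar.1.1)
    have hbt : estar.2 ≠ N.t := fun h => hb (h ▸ t_mem_SV hg' hne')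
    have hbSV : estar.2 ∈ SV N g := mem_SV.mpr ⟨estar.1, Or.inl hestar.1⟩
    obtain ⟨c, hEc, hgc⟩ := out_edge_of_mem_SV hg hbSV hbt
    have hg'c : (estar.2, c) ∉ SE N g' := by
      intro hmem
      exact hb (mem_SV.mpr ⟨c, Or.inr (mem_SE.mp hmem)⟩)
    have hmem : (estar.2, c) ∈ (SE N g) \ (SE N g') :=
      Finset.mem_sdiff.mpr ⟨mem_SE.mpr ⟨hEc, hgc⟩, hg'c⟩
    have := hmax _ hmem
    have := N.topo_lt estar.2 c hEc
    simp only at *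
    omega
  set pick2 : V → V × V := fun v =>
    if h : ∃ u, N.E u v ∧ 0 < g u v then (h.choose, v) else (v, v) with hpick
  have hsnd : ∀ v, (pick2 v).2 = v := by
    intro v; rw [hpick]; simp only []; split <;> rfl
  have hmain : ((SV N g) \ (SV N g')).card ≤ (((SE N g) \ (SE N g')).erase estar).card := by
    refine Finset.card_le_card_of_injOn pick2 ?_ ?_
    · intro v hv
      rw [Finset.mem_coe, Finset.mem_sdiff] at hv
      have hvs : v ≠ N.s := fun h => hv.2 (h ▸ s_mem_SV hg' hne')
      have h : ∃ u, N.E u v ∧ 0 < g u v := in_edge_of_mem_SV hg hv.1 hvs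
      have hpv : pick2 v = (h.choose, v) := by rw [hpick]; simp only [dif_pos h]
      rw [Finset.mem_coe, Finset.mem_erase]
      constructor
      · intro hEq
        apply hv.2
        rw [← show (pick2 v).2 = v from hsnd v, hEq]
        exact hbmem
      · rw [Finset.mem_sdiff, hpv]
        refine ⟨mem_SE.mpr ⟨h.choose_spec.1, h.choose_spec.2⟩, ?_⟩
        intro hmem
        exact hv.2 (mem_SV.mpr ⟨h.choose, Or.inl (mem_SE.mp hmem)⟩)
    · intro a _ b _ hab
      rw [← hsnd a, ← hsnd b, hab]
  have hc1 : (((SE N g) \ (SE N g')).erase estar).card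
      = ((SE N g) \ (SE N g')).card - 1 := Finset.card_erase_of_mem hestar
  have hc2 : ((SE N g) \ (SE N g')).card = (SE N g).card - (SE N g').card :=
    Finset.card_sdiff_of_subset hSEsub
  have hc3 : ((SV N g) \ (SV N g')).card = (SV N g).card - (SV N g').card :=
    Finset.card_sdiff_of_subset hSVsub
  have hc4 := Finset.card_le_card hSEsub
  have hc5 := Finset.card_le_card hSVsub
  have hc6 := Finset.card_pos.mpr hrem
  omega
end Count2

section Main
variable {N : FlowNet V} {g : V → V → ℕ}

lemma empty_case (h : SE N g = ∅) :
    ∃ D : List (List (V × V) × ℕ),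
      (∀ pw ∈ D, IsSTPath N pw.1 ∧ 0 < pw.2) ∧
      (∀ u v, N.E u v →
        (D.map (fun pw => if (u, v) ∈ pw.1 then pw.2 else 0)).sum = g u v) ∧
      D.length + (SV N g).card ≤ (SE N g).card + 2 := by
  refine ⟨[], by simp, ?_, ?_⟩
  · intro u v hE
    simp only [List.map_nil, List.sum_nil]
    by_contra hne
    have : (u, v) ∈ SE N g :=
      mem_SE.mpr ⟨hE, (Nat.pos_of_ne_zero (fun h0 => hne h0.symm) : 0 < g u v)⟩
    rw [h] at this
    simp at this
  · have hSV : SV N g = ∅ := by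
      rw [Finset.eq_empty_iff_forall_notMem]
      intro v hv
      rw [mem_SV] at hv
      obtain ⟨u, hu | hu⟩ := hv
      · have : (u, v) ∈ SE N g := mem_SE.mpr hu
        rw [h] at this; simp at this
      · have : (v, u) ∈ SE N g := mem_SE.mpr hu
        rw [h] at this; simp at this
    simp [hSV]

lemma main_aux (N : FlowNet V) :
    ∀ n : ℕ, ∀ g : V → V → ℕ, Cons N g → (SE N g).card ≤ n →
      ∃ D : List (List (V × V) × ℕ),
        (∀ pw ∈ D, IsSTPath N pw.1 ∧ 0 < pw.2) ∧
        (∀ u v, N.E u v →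
          (D.map (fun pw => if (u, v) ∈ pw.1 then pw.2 else 0)).sum = g u v) ∧
        D.length + (SV N g).card ≤ (SE N g).card + 2 := by
  intro n
  induction n with
  | zero =>
    intro g hcons hcard
    exact empty_case (Finset.card_eq_zero.mp (Nat.le_zero.mp hcard))
  | succ n ih =>
    intro g hcons hcard
    by_cases hSE : SE N g = ∅
    · exact empty_case hSE
    · obtain ⟨⟨a, b⟩, hab⟩ := Finset.nonempty_iff_ne_empty.mpr hSE
      rw [mem_SE] at hab
      obtain ⟨P, hPst, hPsupp⟩ := exists_support_STPath hcons hab.1 hab.2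
      have hPne : P ≠ [] := hPst.1.1
      have hPfin : P.toFinset.Nonempty := by
        rcases P with _ | ⟨x, xs⟩
        · exact absurd rfl hPne
        · exact ⟨x, by simp⟩
      obtain ⟨e₀, he₀fin, hmin⟩ :=
        Finset.exists_min_image P.toFinset (fun e => g e.1 e.2) hPfin
      have he₀P : e₀ ∈ P := List.mem_toFinset.mp he₀fin
      set w := g e₀.1 e₀.2 with hwdef
      have hwpos : 0 < w := (hPsupp e₀ he₀P).2
      have hw : ∀ e ∈ P, w ≤ g e.1 e.2 := fun e he =>
        hmin e (List.mem_toFinset.mpr he)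
      set g' : V → V → ℕ := fun u v => g u v - if (u, v) ∈ P then w else 0 with hg'def
      have hcons' : Cons N g' := cons_sub hcons hPst hw
      have hle : ∀ u v, g' u v ≤ g u v := fun u v => Nat.sub_le _ _
      have hpt : ∀ u v, g u v = g' u v + (if (u, v) ∈ P then w else 0) := by
        intro u v
        by_cases hm : (u, v) ∈ P
        · have : w ≤ g u v := hw (u, v) hm
          simp only [hg'def, if_pos hm]
          omega
        · simp [hg'def, hm]
      have he₀g' : g' e₀.1 e₀.2 = 0 := by
        have : (e₀.1, e₀.2) ∈ P := by rw [Prod.mk.eta]; exact he₀P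
        simp [hg'def, this, ← hwdef]
      have he₀rem : e₀ ∈ (SE N g) \ (SE N g') := by
        rw [Finset.mem_sdiff, mem_SE, mem_SE]
        exact ⟨⟨(hPsupp e₀ he₀P).1, hwpos⟩, fun h => by omega⟩
      have hSEsub : SE N g' ⊆ SE N g := by
        intro e he
        rw [mem_SE] at he ⊢
        exact ⟨he.1, lt_of_lt_of_le he.2 (hle _ _)⟩
      have hSElt : (SE N g').card < (SE N g).card := by
        refine Finset.card_lt_card ⟨hSEsub, fun hsub => ?_⟩
        have := hsub (Finset.mem_sdiff.mp he₀rem).1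
        exact (Finset.mem_sdiff.mp he₀rem).2 this
      by_cases hSE' : SE N g' = ∅
      · refine ⟨[(P, w)], ?_, ?_, ?_⟩
        · intro pw hpw
          rcases List.mem_singleton.mp hpw with rfl
          exact ⟨hPst, hwpos⟩
        · intro u v hE
          simp only [List.map_cons, List.map_nil, List.sum_cons, List.sum_nil, Nat.add_zero]
          have hg'0 : g' u v = 0 := by
            by_contra hne
            have : (u, v) ∈ SE N g' :=
              mem_SE.mpr ⟨hE, (Nat.pos_of_ne_zero hne : 0 < g' u v)⟩
            rw [hSE'] at this; simp at this
          have := hpt u v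
          omega
        · have := sv_card_le hcons
          simp only [List.length_cons, List.length_nil]
          omega
      · have hne' := Finset.nonempty_iff_ne_empty.mpr hSE'
        obtain ⟨D', hD'st, hD'sum, hD'len⟩ := ih g' hcons' (by omega)
        refine ⟨(P, w) :: D', ?_, ?_, ?_⟩
        · intro pw hpw
          rcases List.mem_cons.mp hpw with rfl | hpw
          · exact ⟨hPst, hwpos⟩
          · exact hD'st pw hpw
        · intro u v hE
          simp only [List.map_cons, List.sum_cons]
          rw [hD'sum u v hE]
          have := hpt u v
          omega
        · have hcount := count_lemma hcons hcons' hle hne' ⟨e₀, he₀rem⟩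
          simp only [List.length_cons]
          omega
end Main

/-- Every positive integer flow on a DAG with a single source and single sink
admits a flow decomposition into at most `|E| - |V| + 2` weighted `s`-`t` paths
(Vatinlen et al.). -/
theorem exists_fd_card_le (N : FlowNet V) :
    ∃ D, IsFD N D ∧
      D.length ≤ (Finset.univ.filter (fun e : V × V => N.E e.1 e.2)).card
        - Fintype.card V + 2 := by
  classical
  have hconsf : Cons N N.f := fun v hs ht => N.conservation v hs ht
  by_cases hE : Finset.univ.filter (fun e : V × V => N.E e.1 e.2) = ∅
  · refine ⟨[], ⟨by simp, ?_⟩, by simp⟩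
    intro u v huv
    have : (u, v) ∈ Finset.univ.filter (fun e : V × V => N.E e.1 e.2) := by simp [huv]
    rw [hE] at this; simp at this
  · have hSEf : SE N N.f = Finset.univ.filter (fun e : V × V => N.E e.1 e.2) := by
      ext e
      rw [mem_SE, Finset.mem_filter]
      exact ⟨fun h => ⟨Finset.mem_univ _, h.1⟩, fun h => ⟨h.2, N.f_pos _ _ h.2⟩⟩
    have hSEne : (SE N N.f).Nonempty := by
      rw [hSEf]; exact Finset.nonempty_iff_ne_empty.mpr hE
    have hSVf : SV N N.f = Finset.univ := by
      rw [Finset.eq_univ_iff_forall]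
      intro v
      by_cases hvs : v = N.s
      · exact hvs ▸ s_mem_SV hconsf hSEne
      · obtain ⟨u, hu⟩ := N.source_unique v hvs
        exact mem_SV.mpr ⟨u, Or.inl ⟨hu, N.f_pos _ _ hu⟩⟩
    obtain ⟨D, hDst, hDsum, hDlen⟩ := main_aux N (SE N N.f).card N.f hconsf le_rfl
    refine ⟨D, ⟨hDst, fun u v huv => hDsum u v huv⟩, ?_⟩
    rw [hSEf, hSVf] at hDlen
    rw [Finset.card_univ] at hDlen
    omega
end

section
/- If Q ⊆ E is an edge antichain of a flow network on a DAG (i.e., no two edges of Q lie on a common directed path), then every flow decomposition of the network uses at least |Q| paths; hence |Q| is a lower bound on the minimum flow decomposition size. -/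
variable {V : Type} [Fintype V] [DecidableEq V]

/-- Two edges are independent if no directed path of the network contains both. -/
def Indep (N : FlowNet V) (e₁ e₂ : V × V) : Prop :=
  ¬ ∃ p, IsPath N p ∧ e₁ ∈ p ∧ e₂ ∈ p

/-- An edge antichain: a set of edges, pairwise independent. -/
def IsEdgeAntichain (N : FlowNet V) (Q : Finset (V × V)) : Prop :=
  (∀ e ∈ Q, N.E e.1 e.2) ∧ ∀ e₁ ∈ Q, ∀ e₂ ∈ Q, e₁ ≠ e₂ → Indep N e₁ e₂

/-- An edge antichain is a lower bound on the size of any flow decomposition. -/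
theorem antichain_le_fd_size (N : FlowNet V) (Q : Finset (V × V))
    (hQ : IsEdgeAntichain N Q) :
    ∀ D, IsFD N D → Q.card ≤ D.length := by
  intro D hD
  classical
  have key : ∀ e ∈ Q, ∃ i : ℕ, ∃ h : i < D.length, e ∈ (D[i]).1 := by
    intro e he
    have hmem : ∃ pw ∈ D, e ∈ pw.1 := by
      by_contra h
      push_neg at h
      have hz : (D.map (fun pw => if (e.1, e.2) ∈ pw.1 then pw.2 else 0)).sum = 0 := by
        apply List.sum_eq_zero
        intro x hx
        rw [List.mem_map] at hx
        obtain ⟨pw, hpw, rfl⟩ := hx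
        simp [h pw hpw]
      have hf := hD.2 e.1 e.2 (hQ.1 e he)
      have hpos := N.f_pos e.1 e.2 (hQ.1 e he)
      omega
    obtain ⟨pw, hpw, hepw⟩ := hmem
    obtain ⟨i, hi, rfl⟩ := List.mem_iff_getElem.mp hpw
    exact ⟨i, hi, hepw⟩
  set g : V × V → ℕ := fun e => if he : e ∈ Q then (key e he).choose else 0 with hg
  have hmaps : ∀ e ∈ Q, g e ∈ Finset.range D.length := by
    intro e he
    simp only [hg, dif_pos he]
    exact Finset.mem_range.mpr (key e he).choose_spec.fst
  have hinj : Set.InjOn g Q := by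
    intro e₁ he₁ e₂ he₂ heq
    by_contra hne
    simp only [Finset.mem_coe] at he₁ he₂
    have h1 := (key e₁ he₁).choose_spec
    have h2 := (key e₂ he₂).choose_spec
    obtain ⟨hi1, hm1⟩ := h1
    obtain ⟨hi2, hm2⟩ := h2
    simp only [hg, dif_pos he₁, dif_pos he₂] at heq
    have hip : (key e₁ he₁).choose = (key e₂ he₂).choose := heq
    have hfin : (⟨(key e₁ he₁).choose, hi1⟩ : Fin D.length)
        = ⟨(key e₂ he₂).choose, hi2⟩ := Fin.ext hip
    have hm2' : e₂ ∈ (D.get ⟨(key e₁ he₁).choose, hi1⟩).1 := by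
      rw [hfin]; simpa using hm2
    have hm1' : e₁ ∈ (D.get ⟨(key e₁ he₁).choose, hi1⟩).1 := by simpa using hm1
    have hpath : IsSTPath N (D.get ⟨(key e₁ he₁).choose, hi1⟩).1 :=
      (hD.1 _ (List.get_mem D _)).1
    exact hQ.2 e₁ he₁ e₂ he₂ hne ⟨_, hpath.1, hm1', hm2'⟩
  calc Q.card ≤ (Finset.range D.length).card :=
        Finset.card_le_card_of_injOn g hmaps hinj
    _ = D.length := Finset.card_range _
end

section
/- Conversely, every flow decomposition of f into k s-t paths with weights from W = {w_1,...,w_ℓ} induces, by setting x_{e,i} to the number of weight-w_i paths crossing e, a feasible solution of the MFDW integer program with objective value k; hence the optimum of the ILP equals the minimum number of paths in a W-restricted flow decomposition. -/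
variable {V : Type} [Fintype V] [DecidableEq V]

/-- A flow decomposition all of whose path weights belong to the given set `W`. -/
def IsWFD (N : FlowNet V) (W : Finset ℕ) (D : List (List (V × V) × ℕ)) : Prop :=
  (∀ pw ∈ D, IsSTPath N pw.1 ∧ 0 < pw.2 ∧ pw.2 ∈ W) ∧
  ∀ u v : V, N.E u v →
    (D.map (fun pw => if (u, v) ∈ pw.1 then pw.2 else 0)).sum = N.f u v

/-- Feasibility of the MFDW integer program: `x e i` counts paths of weight `w i`
crossing edge `e`; variables vanish on non-edges, the weighted superposition
equals the flow, and each layer `x (·) i` conserves flow at internal nodes. -/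
def MFDWFeasible (N : FlowNet V) (l : ℕ) (w : Fin l → ℕ) (x : V × V → Fin l → ℕ) : Prop :=
  (∀ e : V × V, ¬ N.E e.1 e.2 → ∀ i, x e i = 0) ∧
  (∀ u v : V, N.E u v → N.f u v = ∑ i : Fin l, w i * x (u, v) i) ∧
  ∀ i : Fin l, ∀ v : V, v ≠ N.s → v ≠ N.t →
    ∑ u ∈ Finset.univ.filter (fun u : V => N.E u v), x (u, v) i
      = ∑ z ∈ Finset.univ.filter (fun z : V => N.E v z), x (v, z) i

/-- The MFDW objective: total `x` on the edges leaving the source. -/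
def MFDWObj (N : FlowNet V) (l : ℕ) (x : V × V → Fin l → ℕ) : ℕ :=
  ∑ u ∈ Finset.univ.filter (fun u : V => N.E N.s u), ∑ i : Fin l, x (N.s, u) i

set_option linter.unusedSectionVars false

namespace MFDWaux


open Finset

variable {N : FlowNet V} {p : List (V × V)}

lemma chain'_topo (he : ∀ e ∈ p, N.E e.1 e.2)
    (hc : List.Chain' (fun e e' : V × V => e.2 = e'.1) p) :
    List.Chain' (fun e e' : V × V => N.topo e.1 < N.topo e'.1 ∧ N.topo e.2 < N.topo e'.2) p := by
  induction p with
  | nil => simp [List.Chain']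
  | cons a l ih =>
    cases l with
    | nil => simp [List.Chain']
    | cons b l' =>
      unfold List.Chain' at hc ⊢
      rw [List.isChain_cons_cons] at hc ⊢
      have ha := N.topo_lt a.1 a.2 (he a (by simp))
      have hb := N.topo_lt b.1 b.2 (he b (by simp))
      exact ⟨⟨hc.1 ▸ ha, hc.1 ▸ hb⟩, ih (fun e he' => he e (by simp [he'])) hc.2⟩

lemma pairwise_topo (he : ∀ e ∈ p, N.E e.1 e.2)
    (hc : List.Chain' (fun e e' : V × V => e.2 = e'.1) p) :
    List.Pairwise (fun e e' : V × V => N.topo e.1 < N.topo e'.1 ∧ N.topo e.2 < N.topo e'.2) p := by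
  haveI : IsTrans (V × V) (fun e e' : V × V => N.topo e.1 < N.topo e'.1 ∧ N.topo e.2 < N.topo e'.2) :=
    ⟨fun _ _ _ h h' => ⟨h.1.trans h'.1, h.2.trans h'.2⟩⟩
  exact List.isChain_iff_pairwise.mp (chain'_topo he hc)

lemma nodup_fst (he : ∀ e ∈ p, N.E e.1 e.2)
    (hc : List.Chain' (fun e e' : V × V => e.2 = e'.1) p) : (p.map Prod.fst).Nodup :=
  (pairwise_topo he hc).map _ (fun _ _ h => fun hEq => absurd (hEq ▸ h.1) (lt_irrefl _))

lemma nodup_snd (he : ∀ e ∈ p, N.E e.1 e.2)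
    (hc : List.Chain' (fun e e' : V × V => e.2 = e'.1) p) : (p.map Prod.snd).Nodup :=
  (pairwise_topo he hc).map _ (fun _ _ h => fun hEq => absurd (hEq ▸ h.2) (lt_irrefl _))

lemma fst_cases (hc : List.Chain' (fun e e' : V × V => e.2 = e'.1) p) :
    ∀ e ∈ p, (p.map Prod.fst).head? = some e.1 ∨ e.1 ∈ p.map Prod.snd := by
  induction p with
  | nil => simp
  | cons a l ih =>
    intro e hel
    rcases List.mem_cons.mp hel with rfl | hel
    · left; simp
    · cases l with
      | nil => simp at hel
      | cons b l' =>
        rcases ih hc.tail e hel with h | h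
        · right
          have hb : b.1 = e.1 := by simpa using h
          have : a.2 = b.1 := (List.isChain_cons_cons.mp hc).1
          simp [← hb, ← this]
        · right; simp only [List.map_cons, List.mem_cons]
          right; simpa using h

lemma snd_cases (hc : List.Chain' (fun e e' : V × V => e.2 = e'.1) p) :
    ∀ e ∈ p, (p.map Prod.snd).getLast? = some e.2 ∨ e.2 ∈ p.map Prod.fst := by
  induction p with
  | nil => simp
  | cons a l ih =>
    intro e hel
    cases l with
    | nil =>
      rcases List.mem_cons.mp hel with rfl | h
      · left; simp
      · simp at h
    | cons b l' =>
      have hlast : ((a :: b :: l').map Prod.snd).getLast? = ((b :: l').map Prod.snd).getLast? := by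
        simp [List.getLast?_cons_cons]
      rcases List.mem_cons.mp hel with rfl | hel
      · right
        have : e.2 = b.1 := (List.isChain_cons_cons.mp hc).1
        simp [this]
      · rcases ih hc.tail e hel with h | h
        · left; rw [hlast]; exact h
        · right; simp only [List.map_cons, List.mem_cons]
          right; simpa using h

lemma card_filter_snd (hp : IsSTPath N p) (v : V) :
    (univ.filter fun u => (u, v) ∈ p).card = if v ∈ p.map Prod.snd then 1 else 0 := by
  obtain ⟨⟨hne, he, hc⟩, hhd, hlt⟩ := hp
  by_cases hv : v ∈ p.map Prod.snd
  · rw [if_pos hv]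
    obtain ⟨e, hep, hev⟩ := List.mem_map.mp hv
    rw [Finset.card_eq_one]
    refine ⟨e.1, ?_⟩
    ext u
    simp only [mem_filter, mem_univ, true_and, mem_singleton]
    constructor
    · intro hup
      have := List.inj_on_of_nodup_map (nodup_snd he hc) hup hep (by simp [hev])
      exact congrArg Prod.fst this
    · rintro rfl
      have : e = (e.1, v) := by rw [← hev]
      rwa [← this]
  · rw [if_neg hv]
    rw [Finset.card_eq_zero]
    ext u
    simp only [mem_filter, mem_univ, true_and, Finset.notMem_empty, iff_false]
    intro hup
    exact hv (List.mem_map.mpr ⟨(u, v), hup, rfl⟩)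

lemma card_filter_fst (hp : IsSTPath N p) (v : V) :
    (univ.filter fun z => (v, z) ∈ p).card = if v ∈ p.map Prod.fst then 1 else 0 := by
  obtain ⟨⟨hne, he, hc⟩, hhd, hlt⟩ := hp
  by_cases hv : v ∈ p.map Prod.fst
  · rw [if_pos hv]
    obtain ⟨e, hep, hev⟩ := List.mem_map.mp hv
    rw [Finset.card_eq_one]
    refine ⟨e.2, ?_⟩
    ext z
    simp only [mem_filter, mem_univ, true_and, mem_singleton]
    constructor
    · intro hzp
      have := List.inj_on_of_nodup_map (nodup_fst he hc) hzp hep (by simp [hev])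
      exact congrArg Prod.snd this
    · rintro rfl
      have : e = (v, e.2) := by rw [← hev]
      rwa [← this]
  · rw [if_neg hv]
    rw [Finset.card_eq_zero]
    ext z
    simp only [mem_filter, mem_univ, true_and, Finset.notMem_empty, iff_false]
    intro hzp
    exact hv (List.mem_map.mpr ⟨(v, z), hzp, rfl⟩)

lemma mem_fst_iff_mem_snd (hp : IsSTPath N p) {v : V} (hs : v ≠ N.s) (ht : v ≠ N.t) :
    v ∈ p.map Prod.fst ↔ v ∈ p.map Prod.snd := by
  obtain ⟨⟨hne, he, hc⟩, hhd, hlt⟩ := hp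
  constructor
  · intro hv
    obtain ⟨e, hep, hev⟩ := List.mem_map.mp hv
    rcases fst_cases hc e hep with h | h
    · exact absurd (by rw [hhd, hev] at h; exact (Option.some_inj.mp h).symm) hs
    · exact hev ▸ h
  · intro hv
    obtain ⟨e, hep, hev⟩ := List.mem_map.mp hv
    rcases snd_cases hc e hep with h | h
    · exact absurd (by rw [hlt, hev] at h; exact (Option.some_inj.mp h).symm) ht
    · exact hev ▸ h

lemma card_in_out (hp : IsSTPath N p) {v : V} (hs : v ≠ N.s) (ht : v ≠ N.t) :
    (univ.filter fun u => (u, v) ∈ p).card = (univ.filter fun z => (v, z) ∈ p).card := by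
  rw [card_filter_snd hp, card_filter_fst hp]
  simp only [mem_fst_iff_mem_snd hp hs ht]

lemma card_src (hp : IsSTPath N p) :
    (univ.filter fun z => (N.s, z) ∈ p).card = 1 := by
  rw [card_filter_fst hp]
  obtain ⟨⟨hne, he, hc⟩, hhd, hlt⟩ := hp
  rw [if_pos]
  exact List.mem_of_mem_head? hhd

lemma sum_ind {Q P : V → Prop} [DecidablePred Q] [DecidablePred P] (h : ∀ z, P z → Q z) (c : ℕ) :
    ∑ z ∈ univ.filter Q, (if P z then c else 0) = (univ.filter P).card * c := by
  rw [← Finset.sum_filter, Finset.filter_filter, Finset.sum_const, smul_eq_mul]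
  congr 2
  ext z
  simp only [mem_filter, mem_univ, true_and]
  exact ⟨fun hz => hz.2, fun hz => ⟨h z hz, hz⟩⟩


noncomputable def cIdx {l : ℕ} (w : Fin l → ℕ) (m : ℕ) : Option (Fin l) :=
  if h : ∃ i, w i = m then some h.choose else none

lemma cIdx_spec {l : ℕ} {w : Fin l → ℕ} {m : ℕ} (h : ∃ i, w i = m) :
    ∃ i, cIdx w m = some i ∧ w i = m :=
  ⟨h.choose, by simp [cIdx, h], h.choose_spec⟩

noncomputable def xOf {l : ℕ} (w : Fin l → ℕ) (D : List (List (V × V) × ℕ)) :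
    V × V → Fin l → ℕ :=
  fun e i => (D.map (fun pw => if e ∈ pw.1 ∧ cIdx w pw.2 = some i then 1 else 0)).sum

lemma sum_list_swap {α β : Type*} (s : Finset β) (D : List α) (F : α → β → ℕ) :
    ∑ b ∈ s, (D.map (fun a => F a b)).sum = (D.map (fun a => ∑ b ∈ s, F a b)).sum := by
  induction D with
  | nil => simp
  | cons a D ih => simp [Finset.sum_add_distrib, ih]

end MFDWaux


namespace MFDWaux

lemma sum_sum_list_swap {α β γ : Type*} (s : Finset β) (s' : Finset γ) (D : List α)
    (F : α → β → γ → ℕ) :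
    ∑ b ∈ s, ∑ c ∈ s', (D.map (fun a => F a b c)).sum
      = (D.map (fun a => ∑ b ∈ s, ∑ c ∈ s', F a b c)).sum := by
  induction D with
  | nil => simp
  | cons a D ih => simp [Finset.sum_add_distrib, ih]

lemma sum_flatMap {α : Type*} (l : List α) (f : α → List ℕ) :
    (l.flatMap f).sum = (l.map (fun a => (f a).sum)).sum := by
  induction l with
  | nil => simp
  | cons a l ih => simp [List.flatMap_cons, ih]

lemma mul_list_sum {α : Type*} (c : ℕ) (D : List α) (F : α → ℕ) :
    c * (D.map F).sum = (D.map (fun a => c * F a)).sum := by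
  induction D with
  | nil => simp
  | cons a D ih => simp [Nat.mul_add, ih]

lemma fd_feasible {l : ℕ} (w : Fin l → ℕ) (N : FlowNet V)
    (D : List (List (V × V) × ℕ)) (hD : IsWFD N (Finset.univ.image w) D) :
    MFDWFeasible N l w (xOf w D) ∧ MFDWObj N l (xOf w D) = D.length := by
  obtain ⟨hmem, hflow⟩ := hD
  have hidx : ∀ pw ∈ D, ∃ i, cIdx w pw.2 = some i ∧ w i = pw.2 := by
    intro pw hpw
    apply cIdx_spec
    obtain ⟨i, _, hi⟩ := Finset.mem_image.mp (hmem pw hpw).2.2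
    exact ⟨i, hi⟩
  refine ⟨⟨?_, ?_, ?_⟩, ?_⟩
  · intro e hne i
    apply List.sum_eq_zero
    intro x hx
    obtain ⟨pw, hpw, hpx⟩ := List.mem_map.mp hx
    rw [← hpx, if_neg]
    rintro ⟨hep, -⟩
    exact hne ((hmem pw hpw).1.1.2.1 e hep)
  · intro u v huv
    rw [← hflow u v huv]
    simp only [xOf]
    rw [show (∑ i : Fin l, w i *
        (D.map (fun pw => if (u, v) ∈ pw.1 ∧ cIdx w pw.2 = some i then 1 else 0)).sum)
      = ∑ i : Fin l, (D.map (fun pw =>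
          w i * (if (u, v) ∈ pw.1 ∧ cIdx w pw.2 = some i then 1 else 0))).sum by
        exact Finset.sum_congr rfl fun i _ => mul_list_sum _ _ _]
    rw [sum_list_swap Finset.univ D
      (fun pw i => w i * (if (u, v) ∈ pw.1 ∧ cIdx w pw.2 = some i then 1 else 0))]
    refine congrArg List.sum (List.map_congr_left fun pw hpw => ?_).symm
    obtain ⟨i₀, hc, hwi⟩ := hidx pw hpw
    by_cases hm : (u, v) ∈ pw.1
    · simp only [hm, true_and, if_pos, hc, Option.some_inj, mul_ite, mul_one, mul_zero]
      rw [Finset.sum_ite_eq Finset.univ i₀ (fun i => w i)]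
      simp [hwi]
    · simp [hm]
  · intro i v hvs hvt
    simp only [xOf]
    rw [sum_list_swap (Finset.univ.filter (fun u : V => N.E u v)) D
      (fun pw u => if (u, v) ∈ pw.1 ∧ cIdx w pw.2 = some i then 1 else 0)]
    rw [sum_list_swap (Finset.univ.filter (fun z : V => N.E v z)) D
      (fun pw z => if (v, z) ∈ pw.1 ∧ cIdx w pw.2 = some i then 1 else 0)]
    refine congrArg List.sum (List.map_congr_left fun pw hpw => ?_)
    have hst : IsSTPath N pw.1 := (hmem pw hpw).1
    by_cases hC : cIdx w pw.2 = some i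
    · simp only [hC, and_true]
      rw [sum_ind (fun u (h : (u, v) ∈ pw.1) => hst.1.2.1 _ h) 1,
          sum_ind (fun z (h : (v, z) ∈ pw.1) => hst.1.2.1 _ h) 1]
      rw [card_in_out hst hvs hvt]
    · simp [hC]
  · simp only [MFDWObj, xOf]
    rw [sum_sum_list_swap (Finset.univ.filter (fun u : V => N.E N.s u)) Finset.univ D
      (fun pw u i => if (N.s, u) ∈ pw.1 ∧ cIdx w pw.2 = some i then 1 else 0)]
    have : ∀ pw ∈ D, (∑ u ∈ Finset.univ.filter (fun u : V => N.E N.s u), ∑ i : Fin l,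
        (if (N.s, u) ∈ pw.1 ∧ cIdx w pw.2 = some i then 1 else 0)) = 1 := by
      intro pw hpw
      obtain ⟨i₀, hc, hwi⟩ := hidx pw hpw
      have hst : IsSTPath N pw.1 := (hmem pw hpw).1
      have h1 : ∀ u : V, (∑ i : Fin l,
          (if (N.s, u) ∈ pw.1 ∧ cIdx w pw.2 = some i then (1:ℕ) else 0))
          = if (N.s, u) ∈ pw.1 then 1 else 0 := by
        intro u
        by_cases hm : (N.s, u) ∈ pw.1
        · simp only [hm, true_and, hc, Option.some_inj]
          rw [Finset.sum_ite_eq Finset.univ i₀ (fun _ => (1:ℕ))]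
          simp
        · simp [hm]
      rw [Finset.sum_congr rfl (fun u _ => h1 u)]
      rw [sum_ind (fun z (h : (N.s, z) ∈ pw.1) => hst.1.2.1 _ h) 1, card_src hst, one_mul]
    rw [List.map_congr_left this]
    simp

end MFDWaux


namespace MFDWaux

open Finset

lemma toSink (N : FlowNet V) (g : V → V → ℕ)
    (hcons : ∀ v : V, v ≠ N.s → v ≠ N.t →
      ∑ u ∈ Finset.univ.filter (fun u : V => N.E u v), g u v
        = ∑ z ∈ Finset.univ.filter (fun z : V => N.E v z), g v z) :
    ∀ n : ℕ, ∀ v : V, (∃ u, N.E u v ∧ 0 < g u v) →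
      Finset.univ.sup N.topo - N.topo v ≤ n →
      ∃ q : List (V × V), (∀ e ∈ q, N.E e.1 e.2 ∧ 0 < g e.1 e.2) ∧
        List.Chain' (fun e e' : V × V => e.2 = e'.1) q ∧
        (q = [] → v = N.t) ∧ (∀ e es, q = e :: es → e.1 = v) ∧
        (∀ e, q.getLast? = some e → e.2 = N.t) := by
  intro n
  induction n with
  | zero =>
    intro v hv hb
    by_cases hvt : v = N.t
    · exact ⟨[], by intro e he; simp at he, List.isChain_nil, fun _ => hvt, by intro e es h; simp at h, by intro e he; simp at he⟩
    · exfalso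
      obtain ⟨u, huv, hgu⟩ := hv
      have hvs : v ≠ N.s := fun h => N.s_no_in u (h ▸ huv)
      have hout : 0 < ∑ z ∈ Finset.univ.filter (fun z : V => N.E v z), g v z := by
        rw [← hcons v hvs hvt]
        exact lt_of_lt_of_le hgu (Finset.single_le_sum (f := fun u' => g u' v)
          (fun _ _ => Nat.zero_le _) (Finset.mem_filter.mpr ⟨Finset.mem_univ u, huv⟩))
      obtain ⟨z, hz, hgz⟩ := Finset.exists_ne_zero_of_sum_ne_zero hout.ne'
      have hEvz : N.E v z := by simpa using (Finset.mem_filter.mp hz).2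
      have h1 : N.topo v < N.topo z := N.topo_lt v z hEvz
      have h2 : N.topo z ≤ Finset.univ.sup N.topo := Finset.le_sup (Finset.mem_univ z)
      omega
  | succ n ih =>
    intro v hv hb
    by_cases hvt : v = N.t
    · exact ⟨[], by intro e he; simp at he, List.isChain_nil, fun _ => hvt, by intro e es h; simp at h, by intro e he; simp at he⟩
    · obtain ⟨u, huv, hgu⟩ := hv
      have hvs : v ≠ N.s := fun h => N.s_no_in u (h ▸ huv)
      have hout : 0 < ∑ z ∈ Finset.univ.filter (fun z : V => N.E v z), g v z := by
        rw [← hcons v hvs hvt]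
        exact lt_of_lt_of_le hgu (Finset.single_le_sum (f := fun u' => g u' v)
          (fun _ _ => Nat.zero_le _) (Finset.mem_filter.mpr ⟨Finset.mem_univ u, huv⟩))
      obtain ⟨z, hz, hgz⟩ := Finset.exists_ne_zero_of_sum_ne_zero hout.ne'
      have hEvz : N.E v z := by simpa using (Finset.mem_filter.mp hz).2
      have hgvz : 0 < g v z := Nat.pos_of_ne_zero hgz
      have h1 : N.topo v < N.topo z := N.topo_lt v z hEvz
      have h2 : N.topo z ≤ Finset.univ.sup N.topo := Finset.le_sup (Finset.mem_univ z)
      obtain ⟨q', hq1, hq2, hq3, hq4, hq5⟩ := ih z ⟨v, hEvz, hgvz⟩ (by omega)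
      refine ⟨(v, z) :: q', ?_, ?_, by simp, ?_, ?_⟩
      · intro e he
        rcases List.mem_cons.mp he with rfl | he
        · exact ⟨hEvz, hgvz⟩
        · exact hq1 e he
      · cases q' with
        | nil => simp [List.Chain']
        | cons e es =>
          exact List.isChain_cons_cons.mpr ⟨(hq4 e es rfl).symm, hq2⟩
      · intro e es h
        rw [List.cons.injEq] at h
        rw [← h.1]
      · intro e he
        cases q' with
        | nil =>
          simp only [List.getLast?_singleton, Option.some_inj] at he
          rw [← he]
          exact hq3 rfl
        | cons e' es =>
          rw [List.getLast?_cons_cons] at he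
          exact hq5 e he

lemma decomp (N : FlowNet V) :
    ∀ T : ℕ, ∀ g : V → V → ℕ, (∑ u : V, ∑ v : V, g u v) = T →
      (∀ u v : V, ¬ N.E u v → g u v = 0) →
      (∀ v : V, v ≠ N.s → v ≠ N.t →
        ∑ u ∈ Finset.univ.filter (fun u : V => N.E u v), g u v
          = ∑ z ∈ Finset.univ.filter (fun z : V => N.E v z), g v z) →
      ∃ P : List (List (V × V)), (∀ p ∈ P, IsSTPath N p) ∧
        (∀ u v : V, (P.map (fun p => if (u, v) ∈ p then 1 else 0)).sum = g u v) ∧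
        P.length = ∑ u ∈ Finset.univ.filter (fun u : V => N.E N.s u), g N.s u := by
  intro T
  induction T using Nat.strong_induction_on with
  | _ T IH =>
    intro g hT h0 hcons
    by_cases hs : ∑ u ∈ Finset.univ.filter (fun u : V => N.E N.s u), g N.s u = 0
    · -- all flow is zero
      have key : ∀ n : ℕ, ∀ u : V, N.topo u = n → ∀ v : V, g u v = 0 := by
        intro n
        induction n using Nat.strong_induction_on with
        | _ n IHn =>
          intro u hn v
          by_cases hE : N.E u v
          · by_cases hus : u = N.s
            · subst hus
              exact (Finset.sum_eq_zero_iff.mp hs) v (by simp [hE])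
            · have hut : u ≠ N.t := fun h => N.t_no_out v (h ▸ hE)
              have hin : ∑ u' ∈ Finset.univ.filter (fun u' : V => N.E u' u), g u' u = 0 := by
                apply Finset.sum_eq_zero
                intro u' hu'
                have hE' : N.E u' u := by simpa using (Finset.mem_filter.mp hu').2
                exact IHn (N.topo u') (hn ▸ N.topo_lt u' u hE') u' rfl u
              have hout := (hcons u hus hut).symm.trans hin
              exact (Finset.sum_eq_zero_iff.mp hout) v (by simp [hE])
          · exact h0 u v hE
      refine ⟨[], by simp, ?_, by simp [hs]⟩
      intro u v
      simp [key (N.topo u) u rfl v]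
    · -- extract a path
      obtain ⟨u₀, hu₀, hgu₀⟩ := Finset.exists_ne_zero_of_sum_ne_zero hs
      have hEsu₀ : N.E N.s u₀ := by simpa using (Finset.mem_filter.mp hu₀).2
      have hgsu₀ : 0 < g N.s u₀ := Nat.pos_of_ne_zero hgu₀
      obtain ⟨q, hq1, hq2, hq3, hq4, hq5⟩ := toSink N g hcons
        (Finset.univ.sup N.topo - N.topo u₀) u₀ ⟨N.s, hEsu₀, hgsu₀⟩ le_rfl
      set p : List (V × V) := (N.s, u₀) :: q with hp
      have hp_edges : ∀ e ∈ p, N.E e.1 e.2 ∧ 0 < g e.1 e.2 := by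
        intro e he
        rcases List.mem_cons.mp he with rfl | he
        · exact ⟨hEsu₀, hgsu₀⟩
        · exact hq1 e he
      have hpchain : List.Chain' (fun e e' : V × V => e.2 = e'.1) p := by
        cases hq : q with
        | nil => simp [hp, hq, List.Chain']
        | cons e es =>
          rw [hp, hq]
          exact List.isChain_cons_cons.mpr ⟨(hq4 e es hq).symm, hq ▸ hq2⟩
      have hpst : IsSTPath N p := by
        refine ⟨⟨by simp [hp], fun e he => (hp_edges e he).1, hpchain⟩, by simp [hp], ?_⟩
        rw [List.getLast?_map]
        cases hq : q with
        | nil =>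
          simp only [hp, hq, List.getLast?_singleton, Option.map_some]
          rw [hq3 hq]
        | cons e es =>
          have hqne : q ≠ [] := by simp [hq]
          obtain ⟨e', he'⟩ := Option.isSome_iff_exists.mp (List.getLast?_isSome.mpr hqne)
          have : p.getLast? = some e' := by
            rw [hp, hq, List.getLast?_cons_cons, ← hq, he']
          rw [this, Option.map_some, hq5 e' he']
      have hle : ∀ u v : V, (if (u, v) ∈ p then 1 else 0) ≤ g u v := by
        intro u v
        split
        · exact (hp_edges (u, v) (by assumption)).2
        · exact Nat.zero_le _
      set g' : V → V → ℕ := fun u v => g u v - (if (u, v) ∈ p then 1 else 0) with hg'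
      have h0' : ∀ u v : V, ¬ N.E u v → g' u v = 0 := by
        intro u v hE
        have := h0 u v hE
        simp only [hg']
        omega
      have hcons' : ∀ v : V, v ≠ N.s → v ≠ N.t →
          ∑ u ∈ Finset.univ.filter (fun u : V => N.E u v), g' u v
            = ∑ z ∈ Finset.univ.filter (fun z : V => N.E v z), g' v z := by
        intro v hvs hvt
        simp only [hg']
        rw [Finset.sum_tsub_distrib _ (fun u _ => hle u v),
            Finset.sum_tsub_distrib _ (fun z _ => hle v z),
            sum_ind (fun u (h : (u, v) ∈ p) => (hp_edges (u, v) h).1) 1,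
            sum_ind (fun z (h : (v, z) ∈ p) => (hp_edges (v, z) h).1) 1,
            hcons v hvs hvt, card_in_out hpst hvs hvt]
      have hdec : (∑ u : V, ∑ v : V, g' u v) < T := by
        rw [← hT]
        apply Finset.sum_lt_sum
        · intro u _
          exact Finset.sum_le_sum (fun v _ => Nat.sub_le _ _)
        · refine ⟨N.s, Finset.mem_univ _, ?_⟩
          apply Finset.sum_lt_sum
          · intro v _
            exact Nat.sub_le _ _
          · refine ⟨u₀, Finset.mem_univ _, ?_⟩
            simp only [hg']
            rw [if_pos (List.mem_cons_self)]
            omega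
      obtain ⟨P', hP1, hP2, hP3⟩ := IH _ hdec g' rfl h0' hcons'
      refine ⟨p :: P', ?_, ?_, ?_⟩
      · intro p' hp'
        rcases List.mem_cons.mp hp' with rfl | hp'
        · exact hpst
        · exact hP1 p' hp'
      · intro u v
        simp only [List.map_cons, List.sum_cons, hP2 u v, hg']
        have := hle u v
        omega
      · have hind : ∑ u ∈ Finset.univ.filter (fun u : V => N.E N.s u),
            (if (N.s, u) ∈ p then 1 else 0) = 1 := by
          rw [sum_ind (fun z (h : (N.s, z) ∈ p) => (hp_edges (N.s, z) h).1) 1,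
            card_src hpst, one_mul]
        have hge : 1 ≤ ∑ u ∈ Finset.univ.filter (fun u : V => N.E N.s u), g N.s u :=
          le_trans hgsu₀ (Finset.single_le_sum (fun _ _ => Nat.zero_le _) (by simp [hEsu₀]))
        simp only [List.length_cons, hP3, hg']
        rw [Finset.sum_tsub_distrib _ (fun u _ => hle N.s u), hind]
        omega

end MFDWaux

/-- Every flow decomposition with weights from `W` induces a feasible solution
of the MFDW integer program of the same objective value; hence the ILP optimum
equals the minimum size of a `W`-restricted flow decomposition. -/
theorem fd_to_mfdw_feasible (N : FlowNet V) (l : ℕ) (w : Fin l → ℕ)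
    (hw : ∀ i, 0 < w i) :
    (∀ D, IsWFD N (Finset.univ.image w) D →
      ∃ x : V × V → Fin l → ℕ, MFDWFeasible N l w x ∧ MFDWObj N l x = D.length) ∧
    sInf {k : ℕ | ∃ x : V × V → Fin l → ℕ, MFDWFeasible N l w x ∧ MFDWObj N l x = k}
      = sInf {k : ℕ | ∃ D, IsWFD N (Finset.univ.image w) D ∧ D.length = k} := by
  have part1 : ∀ D, IsWFD N (Finset.univ.image w) D →
      ∃ x : V × V → Fin l → ℕ, MFDWFeasible N l w x ∧ MFDWObj N l x = D.length := fun D hD =>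
    ⟨MFDWaux.xOf w D, MFDWaux.fd_feasible w N D hD⟩
  refine ⟨part1, ?_⟩
  congr 1
  ext k
  simp only [Set.mem_setOf_eq]
  constructor
  · rintro ⟨x, hx, rfl⟩
    obtain ⟨hx0, hxf, hxc⟩ := hx
    have hdec : ∀ i : Fin l, ∃ P : List (List (V × V)),
        (∀ p ∈ P, IsSTPath N p) ∧
        (∀ u v : V, (P.map (fun p => if (u, v) ∈ p then 1 else 0)).sum = x (u, v) i) ∧
        P.length = ∑ u ∈ Finset.univ.filter (fun u : V => N.E N.s u), x (N.s, u) i :=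
      fun i => MFDWaux.decomp N _ (fun u v => x (u, v) i) rfl
        (fun u v h => hx0 (u, v) h i) (hxc i)
    choose P hP1 hP2 hP3 using hdec
    refine ⟨(List.finRange l).flatMap (fun i => (P i).map (fun p => (p, w i))), ⟨?_, ?_⟩, ?_⟩
    · intro pw hpw
      rw [List.mem_flatMap] at hpw
      obtain ⟨i, -, hpw⟩ := hpw
      obtain ⟨p, hp, rfl⟩ := List.mem_map.mp hpw
      exact ⟨hP1 i p hp, hw i, Finset.mem_image_of_mem w (Finset.mem_univ i)⟩
    · intro u v huv
      rw [List.map_flatMap]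
      rw [MFDWaux.sum_flatMap]
      rw [hxf u v huv, Fin.sum_univ_def]
      refine congrArg List.sum (List.map_congr_left fun i _ => ?_)
      rw [List.map_map]
      rw [show ((fun pw : List (V × V) × ℕ => if (u, v) ∈ pw.1 then pw.2 else 0) ∘
          (fun p => (p, w i))) = fun p => w i * (if (u, v) ∈ p then 1 else 0) by
        funext p; by_cases h : (u, v) ∈ p <;> simp [h]]
      rw [← MFDWaux.mul_list_sum, hP2 i u v]
    · rw [List.length_flatMap]
      rw [MFDWObj, Finset.sum_comm, Fin.sum_univ_def]
      refine congrArg List.sum (List.map_congr_left fun i _ => ?_).symm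
      simp [hP3 i]
  · rintro ⟨D, hD, rfl⟩
    exact part1 D hD
end

section
/- Let ||f|| be the maximum flow value of any edge and let W = {2^j : j = 0, ..., ⌈log₂ ||f||⌉}. Then the minimum size of a flow decomposition with weights restricted to W is at most (⌈log₂ ||f||⌉ + 1) times the minimum flow decomposition size; i.e., solving MFDW with powers-of-two weights gives a (⌈log₂ ||f||⌉ + 1)-approximation of MFD. -/
variable {V : Type} [Fintype V] [DecidableEq V]

/-- The largest flow value of any edge. -/
def maxFlow (N : FlowNet V) : ℕ :=
  (Finset.univ.filter (fun e : V × V => N.E e.1 e.2)).sup (fun e => N.f e.1 e.2)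

private lemma pow2_decomp : ∀ w : ℕ, 0 < w → ∃ L : List ℕ, L.sum = w ∧
    L.length ≤ Nat.log 2 w + 1 ∧ ∀ x ∈ L, ∃ j ≤ Nat.log 2 w, x = 2 ^ j := by
  intro w
  induction w using Nat.strong_induction_on with
  | _ w ih =>
    intro hw
    have hpk : 2 ^ Nat.log 2 w ≤ w := Nat.pow_log_le_self 2 hw.ne'
    by_cases h0 : w - 2 ^ Nat.log 2 w = 0
    · have hweq : w = 2 ^ Nat.log 2 w :=
        le_antisymm (Nat.sub_eq_zero_iff_le.mp h0) hpk
      exact ⟨[2 ^ Nat.log 2 w], by simp [← hweq], by simp,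
        by intro x hx; simp at hx; exact ⟨Nat.log 2 w, le_refl _, hx⟩⟩
    · set r := w - 2 ^ Nat.log 2 w with hrdef
      have hrpos : 0 < r := Nat.pos_of_ne_zero h0
      have hwlt : w < 2 ^ (Nat.log 2 w + 1) := Nat.lt_pow_succ_log_self (by norm_num) w
      have hrlt : r < 2 ^ Nat.log 2 w := by
        have h2 : w < 2 ^ Nat.log 2 w * 2 := by
          have := hwlt; rwa [pow_succ] at this
        omega
      have hrw : r < w := by
        have : 0 < 2 ^ Nat.log 2 w := Nat.pow_pos (by norm_num)
        omega
      obtain ⟨L', h1, h2, h3⟩ := ih r hrw hrpos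
      have hlogr : Nat.log 2 r < Nat.log 2 w := Nat.log_lt_of_lt_pow hrpos.ne' hrlt
      refine ⟨2 ^ Nat.log 2 w :: L', ?_, ?_, ?_⟩
      · simp only [List.sum_cons, h1, hrdef]; omega
      · simp only [List.length_cons]; omega
      · intro x hx
        rcases List.mem_cons.mp hx with rfl | hx'
        · exact ⟨Nat.log 2 w, le_refl _, rfl⟩
        · obtain ⟨j, hj, rfl⟩ := h3 x hx'
          exact ⟨j, by omega, rfl⟩

private lemma build_wfd {V : Type} [Fintype V] [DecidableEq V] (M : ℕ) :
    ∀ D : List (List (V × V) × ℕ),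
    (∀ pw ∈ D, 0 < pw.2 ∧ pw.2 ≤ M) →
    ∃ D' : List (List (V × V) × ℕ),
      (∀ pw' ∈ D', ∃ pw ∈ D, pw'.1 = pw.1 ∧ ∃ j ≤ Nat.log 2 M, pw'.2 = 2 ^ j) ∧
      D'.length ≤ (Nat.log 2 M + 1) * D.length ∧
      ∀ u v : V, (D'.map (fun pw => if (u, v) ∈ pw.1 then pw.2 else 0)).sum
        = (D.map (fun pw => if (u, v) ∈ pw.1 then pw.2 else 0)).sum := by
  intro D
  induction D with
  | nil => intro _; exact ⟨[], by simp, by simp, by simp⟩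
  | cons pw rest ih =>
    intro h
    obtain ⟨hpos, hle⟩ := h pw (by simp)
    obtain ⟨Dr, hr1, hr2, hr3⟩ := ih (fun q hq => h q (by simp [hq]))
    obtain ⟨L, hL1, hL2, hL3⟩ := pow2_decomp pw.2 hpos
    refine ⟨L.map (fun x => (pw.1, x)) ++ Dr, ?_, ?_, ?_⟩
    · intro pw' hpw'
      rcases List.mem_append.mp hpw' with h' | h'
      · obtain ⟨x, hx, rfl⟩ := List.mem_map.mp h'
        obtain ⟨j, hj, rfl⟩ := hL3 x hx
        exact ⟨pw, by simp, rfl, j, le_trans hj (Nat.log_mono_right hle), rfl⟩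
      · obtain ⟨q, hq, hrest⟩ := hr1 pw' h'
        exact ⟨q, by simp [hq], hrest⟩
    · simp only [List.length_append, List.length_map, List.length_cons]
      have hlm : Nat.log 2 pw.2 ≤ Nat.log 2 M := Nat.log_mono_right hle
      calc L.length + Dr.length
          ≤ (Nat.log 2 M + 1) + (Nat.log 2 M + 1) * rest.length := by
            exact add_le_add (by omega) hr2
        _ = (Nat.log 2 M + 1) * (rest.length + 1) := by ring
    · intro u v
      simp only [List.map_append, List.sum_append, List.map_map, List.map_cons,
        List.sum_cons, hr3 u v]
      congr 1
      by_cases hmem : (u, v) ∈ pw.1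
      · simpa [hmem, Function.comp_def] using hL1
      · simp [hmem, Function.comp_def]

/-- Restricting weights to the powers of two `2^0, …, 2^{⌈log₂ ‖f‖⌉}` yields a
`(⌈log₂ ‖f‖⌉ + 1)`-approximation of minimum flow decomposition. -/
theorem mfdw_pow2_approx (N : FlowNet V) :
    sInf {k : ℕ | ∃ D,
        IsWFD N ((Finset.range (Nat.clog 2 (maxFlow N) + 1)).image (fun j => 2 ^ j)) D ∧
        D.length = k}
      ≤ (Nat.clog 2 (maxFlow N) + 1) *
        sInf {k : ℕ | ∃ D, IsFD N D ∧ D.length = k} := by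
  set W := ((Finset.range (Nat.clog 2 (maxFlow N) + 1)).image (fun j => 2 ^ j)) with hW
  set S := {k : ℕ | ∃ D, IsFD N D ∧ D.length = k} with hS
  by_cases hne : S.Nonempty
  · obtain ⟨D, hD, hlen⟩ := Nat.sInf_mem hne
    -- every weight in D is at most maxFlow N
    have hbound : ∀ pw ∈ D, pw.2 ≤ maxFlow N := by
      intro pw hpw
      obtain ⟨⟨⟨hnil, hedges, _⟩, _, _⟩, hpos⟩ := hD.1 pw hpw
      obtain ⟨e, he⟩ := List.exists_mem_of_ne_nil pw.1 hnil
      have hE : N.E e.1 e.2 := hedges e he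
      have hsum := hD.2 e.1 e.2 hE
      have hmem : pw.2 ∈ D.map (fun pw => if (e.1, e.2) ∈ pw.1 then pw.2 else 0) := by
        refine List.mem_map.mpr ⟨pw, hpw, ?_⟩
        simp [he]
      have h1 : pw.2 ≤ N.f e.1 e.2 := by
        rw [← hsum]
        exact List.single_le_sum (fun x _ => Nat.zero_le x) _ hmem
      refine le_trans h1 ?_
      exact Finset.le_sup (f := fun e : V × V => N.f e.1 e.2)
        (Finset.mem_filter.mpr ⟨Finset.mem_univ e, hE⟩)
    obtain ⟨D', hD'1, hD'2, hD'3⟩ := build_wfd (maxFlow N) D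
      (fun pw hpw => ⟨(hD.1 pw hpw).2, hbound pw hpw⟩)
    have hWFD : IsWFD N W D' := by
      constructor
      · intro pw' hpw'
        obtain ⟨pw, hpw, heq, j, hj, hw⟩ := hD'1 pw' hpw'
        refine ⟨heq ▸ (hD.1 pw hpw).1, by rw [hw]; positivity, ?_⟩
        rw [hw, hW]
        refine Finset.mem_image.mpr ⟨j, Finset.mem_range.mpr ?_, rfl⟩
        have := Nat.log_le_clog 2 (maxFlow N)
        omega
      · intro u v huv
        rw [hD'3 u v]
        exact hD.2 u v huv
    have h1 : sInf {k : ℕ | ∃ D, IsWFD N W D ∧ D.length = k} ≤ D'.length :=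
      Nat.sInf_le ⟨D', hWFD, rfl⟩
    refine le_trans h1 (le_trans hD'2 ?_)
    have := Nat.log_le_clog 2 (maxFlow N)
    have h2 : Nat.log 2 (maxFlow N) + 1 ≤ Nat.clog 2 (maxFlow N) + 1 := by omega
    rw [hlen]
    exact Nat.mul_le_mul h2 (le_refl _)
  · have hempty : {k : ℕ | ∃ D, IsWFD N W D ∧ D.length = k} = ∅ := by
      ext k
      simp only [Set.mem_setOf_eq, Set.mem_empty_iff_false, iff_false]
      rintro ⟨D, hD, hl⟩
      exact hne ⟨k, D, ⟨fun pw hpw => ⟨(hD.1 pw hpw).1, (hD.1 pw hpw).2.1⟩, hD.2⟩, hl⟩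
    rw [hempty, Nat.sInf_empty]
    exact Nat.zero_le _
end

section
/- The Y-to-V contraction preserves flow decompositions: let v be a node of in-degree 1 in a flow network on a DAG, with unique in-neighbor u and out-neighbors w_1,...,w_ℓ. Form the graph G' by deleting v and its incident edges and adding edges (u, w_i) with flow f'(u, w_i) = f(v, w_i). Then flow decompositions of (G', f') of size k are in bijection with flow decompositions of (G, f) of size k; in particular the minimum flow decomposition sizes of (G, f) and (G', f') are equal. -/
variable {V : Type} [Fintype V] [DecidableEq V]

set_option linter.unusedSectionVars false

def contract (v : V) : List (V × V) → List (V × V)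
  | [] => []
  | [e] => [e]
  | e :: e' :: rest =>
    if e.2 = v then (e.1, e'.2) :: contract v rest
    else e :: contract v (e' :: rest)

lemma contract_ne_nil (v : V) {p : List (V × V)} (h : p ≠ []) : contract v p ≠ [] := by
  match p with
  | [] => exact absurd rfl h
  | [e] => simp [contract]
  | e :: e' :: rest => simp only [contract]; split <;> simp

lemma contract_eq_nil (v : V) {p : List (V × V)} (h : contract v p = []) : p = [] := by
  by_contra hne; exact contract_ne_nil v hne h

lemma contract_head (v : V) (p : List (V × V)) :
    (contract v p).head?.map Prod.fst = p.head?.map Prod.fst := by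
  match p with
  | [] => rfl
  | [e] => rfl
  | e :: e' :: rest => simp only [contract]; split <;> rfl

lemma contract_last (v : V) (p : List (V × V)) :
    (contract v p).getLast?.map Prod.snd = p.getLast?.map Prod.snd := by
  induction p using contract.induct (v := v) with
  | case1 => rfl
  | case2 e => rfl
  | case3 e e' rest h ih =>
    simp only [contract, if_pos h]
    rcases eq_or_ne rest [] with hr | hr
    · subst hr; rfl
    · have h1 : contract v rest ≠ [] := contract_ne_nil v hr
      obtain ⟨x, l, hxl⟩ := List.exists_cons_of_ne_nil h1
      obtain ⟨y, m, hym⟩ := List.exists_cons_of_ne_nil hr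
      rw [hxl, List.getLast?_cons_cons, ← hxl, ih, hym,
        List.getLast?_cons_cons, List.getLast?_cons_cons, ← hym]
  | case4 e e' rest h ih =>
    simp only [contract, if_neg h]
    rw [List.getLast?_cons_cons]
    have h1 : contract v (e' :: rest) ≠ [] := contract_ne_nil v (by simp)
    obtain ⟨x, l, hxl⟩ := List.exists_cons_of_ne_nil h1
    rw [hxl, List.getLast?_cons_cons, ← hxl, ih]

lemma contract_spec (N : FlowNet V) (u v : V)
    (hin : ∀ a, N.E a v → a = u) :
    ∀ p : List (V × V),
    List.Chain' (fun e e' => e.2 = e'.1) p →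
    (∀ e ∈ p, N.E e.1 e.2) →
    (∀ x y : V, p.head? = some (x,y) → x ≠ v) →
    (∀ x y : V, p.getLast? = some (x,y) → y ≠ v) →
    (∀ e ∈ contract v p, e.1 ≠ v ∧ e.2 ≠ v ∧ (N.E e.1 e.2 ∨ (e.1 = u ∧ N.E v e.2)))
    ∧ List.Chain' (fun e e' => e.2 = e'.1) (contract v p)
    ∧ (∀ x y : V, ((x,y) ∈ contract v p ↔
        ((x,y) ∈ p ∧ x ≠ v ∧ y ≠ v) ∨ (x = u ∧ (v,y) ∈ p))) := by
  intro p
  induction p using contract.induct (v := v) with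
  | case1 => intro _ _ _ _; exact ⟨by simp [contract], by simp [contract, List.Chain'], by simp [contract]⟩
  | case2 e =>
    obtain ⟨a, b⟩ := e
    intro hch hE hhd hls
    have ha : a ≠ v := hhd a b (by simp)
    have hb : b ≠ v := hls a b (by simp)
    refine ⟨?_, by simp [contract, List.Chain'], ?_⟩
    · intro f hf
      simp [contract] at hf
      subst hf
      exact ⟨ha, hb, Or.inl (hE (a,b) (by simp))⟩
    · intro x y
      simp only [contract, List.mem_singleton, List.mem_cons, List.not_mem_nil, or_false,
        Prod.mk.injEq]
      constructor
      · rintro ⟨rfl, rfl⟩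
        exact Or.inl ⟨⟨rfl, rfl⟩, ha, hb⟩
      · rintro (⟨⟨rfl, rfl⟩, _, _⟩ | ⟨rfl, rfl, rfl⟩)
        · exact ⟨rfl, rfl⟩
        · exact absurd rfl ha
  | case3 e e' rest hev ih =>
    obtain ⟨a, b⟩ := e
    obtain ⟨c, d⟩ := e'
    simp only at hev
    intro hch hE hhd hls
    rw [List.Chain', List.isChain_cons_cons] at hch
    obtain ⟨h1, hch2⟩ := hch
    simp only at h1
    rw [List.isChain_cons] at hch2
    obtain ⟨hhd2, hchr⟩ := hch2
    have hcv : c = v := by rw [← h1, hev]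
    have hEr : ∀ f ∈ rest, N.E f.1 f.2 := fun f hf => hE f (by simp [hf])
    have hEe' : N.E v d := by have := hE (c,d) (by simp); rwa [hcv] at this
    have hd : d ≠ v := fun h => lt_irrefl _ (h ▸ N.topo_lt v d hEe')
    have hau : a = u := hin a (by have := hE (a,b) (by simp); simpa [hev] using this)
    have ha : a ≠ v := hhd a b (by simp)
    have hhdr : ∀ x y : V, rest.head? = some (x,y) → x ≠ v := by
      intro x y hxy
      have := hhd2 (x,y) hxy
      simp only at this
      rw [← this]; exact hd
    have hlsr : ∀ x y : V, rest.getLast? = some (x,y) → y ≠ v := by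
      intro x y hxy
      apply hls x y
      rcases rest with _ | ⟨z, zs⟩
      · simp at hxy
      · rw [List.getLast?_cons_cons, List.getLast?_cons_cons]; exact hxy
    obtain ⟨ihs, ihc, ihm⟩ := ih hchr hEr hhdr hlsr
    simp only [contract, if_pos hev]
    refine ⟨?_, ?_, ?_⟩
    · rintro f hf
      rcases List.mem_cons.mp hf with h | h
      · subst h; exact ⟨ha, hd, Or.inr ⟨hau, hEe'⟩⟩
      · exact ihs f h
    · rw [List.Chain', List.isChain_cons]
      refine ⟨?_, ihc⟩
      intro g hg
      rw [Option.mem_def] at hg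
      have hh := contract_head v rest
      rw [hg] at hh
      cases hr : rest.head? with
      | none => rw [hr] at hh; simp at hh
      | some c2 =>
        rw [hr] at hh
        simp only [Option.map_some] at hh
        have hd2 : d = c2.1 := hhd2 c2 (by rw [Option.mem_def, hr])
        show d = g.1
        rw [hd2]
        exact (Option.some.inj hh).symm
    · intro x y
      simp only [List.mem_cons, Prod.mk.injEq]
      rw [ihm x y]
      constructor
      · rintro (⟨rfl, rfl⟩ | ⟨⟨h1m, h2, h3⟩ | ⟨h1, h2⟩⟩)
        · exact Or.inr ⟨hau, Or.inr (Or.inl ⟨hcv.symm, rfl⟩)⟩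
        · exact Or.inl ⟨Or.inr (Or.inr h1m), h2, h3⟩
        · exact Or.inr ⟨h1, Or.inr (Or.inr h2)⟩
      · rintro (⟨(⟨rfl, rfl⟩ | ⟨rfl, rfl⟩ | h1m) , h2, h3⟩ | ⟨rfl, (⟨h4, rfl⟩ | ⟨rfl, rfl⟩ | h5)⟩)
        · exact absurd hev h3
        · exact absurd hcv h2
        · exact Or.inr (Or.inl ⟨h1m, h2, h3⟩)
        · exact absurd h4.symm ha
        · exact Or.inl ⟨hau.symm, rfl⟩
        · exact Or.inr (Or.inr ⟨rfl, h5⟩)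
  | case4 e e' rest hev ih =>
    obtain ⟨a, b⟩ := e
    obtain ⟨c, d⟩ := e'
    simp only at hev
    intro hch hE hhd hls
    rw [List.Chain', List.isChain_cons_cons] at hch
    obtain ⟨h1, hch'⟩ := hch
    simp only at h1
    have hE' : ∀ f ∈ (c,d) :: rest, N.E f.1 f.2 := fun f hf => hE f (by simp [List.mem_cons] at hf ⊢; tauto)
    have hhd' : ∀ x y : V, ((c,d) :: rest).head? = some (x,y) → x ≠ v := by
      intro x y hxy; simp at hxy
      rw [← hxy.1, ← h1]; exact hev
    have hls' : ∀ x y : V, ((c,d) :: rest).getLast? = some (x,y) → y ≠ v := by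
      intro x y hxy; exact hls x y (by rw [List.getLast?_cons_cons]; exact hxy)
    have ha : a ≠ v := hhd a b (by simp)
    obtain ⟨ihs, ihc, ihm⟩ := ih hch' hE' hhd' hls'
    simp only [contract, if_neg hev]
    refine ⟨?_, ?_, ?_⟩
    · rintro f hf
      rcases List.mem_cons.mp hf with h | h
      · subst h; exact ⟨ha, hev, Or.inl (hE (a,b) (by simp))⟩
      · exact ihs f h
    · rw [List.Chain', List.isChain_cons]
      refine ⟨?_, ihc⟩
      intro g hg
      rw [Option.mem_def] at hg
      have hh := contract_head v ((c,d) :: rest)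
      rw [hg] at hh
      simp only [List.head?_cons, Option.map_some] at hh
      show b = g.1
      rw [h1]
      exact (Option.some.inj hh).symm
    · intro x y
      simp only [List.mem_cons, Prod.mk.injEq]
      rw [ihm x y]
      simp only [List.mem_cons, Prod.mk.injEq]
      constructor
      · rintro (⟨rfl, rfl⟩ | ⟨⟨h1m, h2, h3⟩ | ⟨h1, h2⟩⟩)
        · exact Or.inl ⟨Or.inl ⟨rfl, rfl⟩, ha, hev⟩
        · exact Or.inl ⟨Or.inr h1m, h2, h3⟩
        · exact Or.inr ⟨h1, Or.inr h2⟩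
      · rintro (⟨(⟨rfl, rfl⟩ | h1m), h2, h3⟩ | ⟨rfl, (⟨h4, rfl⟩ | h5)⟩)
        · exact Or.inl ⟨rfl, rfl⟩
        · exact Or.inr (Or.inl ⟨h1m, h2, h3⟩)
        · exact absurd h4.symm ha
        · exact Or.inr (Or.inr ⟨rfl, h5⟩)

def expand (u v : V) (Ev : V → Bool) :
    List ({x : V // x ≠ v} × {x : V // x ≠ v}) → List (V × V)
  | [] => []
  | (a, b) :: rest =>
    if a.1 = u ∧ Ev b.1 then (u, v) :: (v, b.1) :: expand u v Ev rest
    else (a.1, b.1) :: expand u v Ev rest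

lemma expand_ne_nil (u v : V) (Ev : V → Bool)
    {p : List ({x : V // x ≠ v} × {x : V // x ≠ v})} (h : p ≠ []) :
    expand u v Ev p ≠ [] := by
  match p with
  | [] => exact absurd rfl h
  | (a, b) :: rest => simp only [expand]; split <;> simp

lemma expand_head (u v : V) (Ev : V → Bool)
    (p : List ({x : V // x ≠ v} × {x : V // x ≠ v})) :
    (expand u v Ev p).head?.map Prod.fst = p.head?.map (fun e => e.1.1) := by
  match p with
  | [] => rfl
  | (a, b) :: rest =>
    simp only [expand]
    split
    · rename_i hcond; simp [hcond.1]
    · rfl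

lemma expand_last (u v : V) (Ev : V → Bool)
    (p : List ({x : V // x ≠ v} × {x : V // x ≠ v})) :
    (expand u v Ev p).getLast?.map Prod.snd = p.getLast?.map (fun e => e.2.1) := by
  induction p with
  | nil => rfl
  | cons e rest ih =>
    obtain ⟨a, b⟩ := e
    simp only [expand]
    rcases eq_or_ne rest [] with hr | hr
    · subst hr
      split <;> simp [expand]
    · have h1 : expand u v Ev rest ≠ [] := expand_ne_nil u v Ev hr
      obtain ⟨x, l, hxl⟩ := List.exists_cons_of_ne_nil h1
      obtain ⟨y, m, hym⟩ := List.exists_cons_of_ne_nil hr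
      split
      · rw [hxl, List.getLast?_cons_cons, List.getLast?_cons_cons, ← hxl, ih, hym,
          List.getLast?_cons_cons, ← hym]
      · rw [hxl, List.getLast?_cons_cons, ← hxl, ih, hym,
          List.getLast?_cons_cons, ← hym]

lemma expand_spec (N : FlowNet V) (u v : V) (N' : FlowNet {x : V // x ≠ v})
    (huv : N.E u v) (huvne : u ≠ v)
    (hE : ∀ a b : {x : V // x ≠ v},
      N'.E a b = (N.E a.1 b.1 || (decide (a.1 = u) && N.E v b.1))) :
    ∀ p : List ({x : V // x ≠ v} × {x : V // x ≠ v}),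
    List.Chain' (fun e e' => e.2 = e'.1) p →
    (∀ e ∈ p, N'.E e.1 e.2) →
    (∀ e ∈ expand u v (N.E v) p, N.E e.1 e.2)
    ∧ List.Chain' (fun e e' : V × V => e.2 = e'.1) (expand u v (N.E v) p)
    ∧ ((u, v) ∈ expand u v (N.E v) p ↔
        ∃ a b : {x : V // x ≠ v}, (a, b) ∈ p ∧ a.1 = u ∧ N.E v b.1)
    ∧ (∀ y : V, (v, y) ∈ expand u v (N.E v) p ↔
        ∃ a b : {x : V // x ≠ v}, (a, b) ∈ p ∧ a.1 = u ∧ N.E v b.1 ∧ b.1 = y)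
    ∧ (∀ x y : V, x ≠ v → y ≠ v → ¬(x = u ∧ N.E v y) →
        ((x, y) ∈ expand u v (N.E v) p ↔
          ∃ a b : {x : V // x ≠ v}, (a, b) ∈ p ∧ a.1 = x ∧ b.1 = y)) := by
  intro p
  induction p with
  | nil =>
    intro _ _
    refine ⟨by simp [expand], by simp [expand, List.Chain'], by simp [expand], by simp [expand],
      by simp [expand]⟩
  | cons e rest ih =>
    obtain ⟨a, b⟩ := e
    intro hch hEp
    rw [List.Chain', List.isChain_cons] at hch
    obtain ⟨hhd, hchr⟩ := hch
    have hEr : ∀ f ∈ rest, N'.E f.1 f.2 := fun f hf => hEp f (by simp [hf])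
    obtain ⟨ihE, ihc, ihm1, ihm2, ihm3⟩ := ih hchr hEr
    have hhead : ∀ g ∈ (expand u v (N.E v) rest).head?, ∃ e2 ∈ rest.head?, g.1 = e2.1.1 := by
      intro g hg
      rw [Option.mem_def] at hg
      have hh := expand_head u v (N.E v) rest
      rw [hg] at hh
      cases hr : rest.head? with
      | none => rw [hr] at hh; simp at hh
      | some e2 =>
        rw [hr] at hh
        simp only [Option.map_some] at hh
        exact ⟨e2, Option.mem_def.mpr rfl, Option.some.inj hh⟩
    have hlink : ∀ g ∈ (expand u v (N.E v) rest).head?, b.1 = g.1 := by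
      intro g hg
      obtain ⟨e2, he2, hg1⟩ := hhead g hg
      have := hhd e2 he2
      rw [hg1, ← this]
    by_cases hcond : a.1 = u ∧ N.E v b.1
    · simp only [expand, if_pos hcond]
      refine ⟨?_, ?_, ?_, ?_, ?_⟩
      · rintro f hf
        rcases List.mem_cons.mp hf with h | h
        · subst h; exact huv
        · rcases List.mem_cons.mp h with h | h
          · subst h; exact hcond.2
          · exact ihE f h
      · rw [List.Chain', List.isChain_cons_cons, List.isChain_cons]
        exact ⟨rfl, hlink, ihc⟩
      · constructor
        · intro hm
          rcases List.mem_cons.mp hm with h | h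
          · exact ⟨a, b, List.mem_cons_self .., hcond.1, hcond.2⟩
          rcases List.mem_cons.mp h with h | h
          · exact absurd (congrArg Prod.snd h).symm b.2
          · obtain ⟨a2, b2, h1, h2, h3⟩ := ihm1.mp h
            exact ⟨a2, b2, List.mem_cons_of_mem _ h1, h2, h3⟩
        · rintro ⟨a2, b2, h1, h2, h3⟩
          rcases List.mem_cons.mp h1 with h | h
          · exact List.mem_cons_self ..
          · exact List.mem_cons_of_mem _ (List.mem_cons_of_mem _ (ihm1.mpr ⟨a2, b2, h, h2, h3⟩))
      · intro y
        constructor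
        · intro hm
          rcases List.mem_cons.mp hm with h | h
          · exact absurd (congrArg Prod.fst h).symm huvne
          rcases List.mem_cons.mp h with h | h
          · refine ⟨a, b, List.mem_cons_self .., hcond.1, hcond.2, ?_⟩
            exact (congrArg Prod.snd h).symm
          · obtain ⟨a2, b2, h1, h2, h3, h4⟩ := (ihm2 y).mp h
            exact ⟨a2, b2, List.mem_cons_of_mem _ h1, h2, h3, h4⟩
        · rintro ⟨a2, b2, h1, h2, h3, h4⟩
          rcases List.mem_cons.mp h1 with h | h
          · apply List.mem_cons_of_mem
            apply List.mem_cons.mpr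
            left
            rw [Prod.ext_iff] at h; simp only at h
            rw [← h4, h.2]
          · exact List.mem_cons_of_mem _ (List.mem_cons_of_mem _ ((ihm2 y).mpr ⟨a2, b2, h, h2, h3, h4⟩))
      · intro x y hxv hyv hnc
        constructor
        · intro hm
          rcases List.mem_cons.mp hm with h | h
          · exact absurd (congrArg Prod.snd h) hyv
          rcases List.mem_cons.mp h with h | h
          · exact absurd (congrArg Prod.fst h) hxv
          · obtain ⟨a2, b2, h1, h2, h3⟩ := (ihm3 x y hxv hyv hnc).mp h
            exact ⟨a2, b2, List.mem_cons_of_mem _ h1, h2, h3⟩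
        · rintro ⟨a2, b2, h1, h2, h3⟩
          rcases List.mem_cons.mp h1 with h | h
          · rw [Prod.ext_iff] at h; simp only at h
            exact absurd (by rw [← h2, ← h3, h.1, h.2]; exact hcond) hnc
          · exact List.mem_cons_of_mem _ (List.mem_cons_of_mem _ ((ihm3 x y hxv hyv hnc).mpr ⟨a2, b2, h, h2, h3⟩))
    · simp only [expand, if_neg hcond]
      have hEab : N.E a.1 b.1 := by
        have := hEp (a, b) (by simp)
        rw [hE a b] at this
        simp only [Bool.or_eq_true, Bool.and_eq_true, decide_eq_true_eq] at this
        rcases this with h | h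
        · exact h
        · exact absurd ⟨h.1, h.2⟩ hcond
      refine ⟨?_, ?_, ?_, ?_, ?_⟩
      · rintro f hf
        rcases List.mem_cons.mp hf with h | h
        · subst h; exact hEab
        · exact ihE f h
      · rw [List.Chain', List.isChain_cons]
        exact ⟨hlink, ihc⟩
      · constructor
        · intro hm
          rcases List.mem_cons.mp hm with h | h
          · exact absurd (congrArg Prod.snd h).symm b.2
          · obtain ⟨a2, b2, h1, h2, h3⟩ := ihm1.mp h
            exact ⟨a2, b2, List.mem_cons_of_mem _ h1, h2, h3⟩
        · rintro ⟨a2, b2, h1, h2, h3⟩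
          rcases List.mem_cons.mp h1 with h | h
          · rw [Prod.ext_iff] at h; simp only at h
            exact absurd ⟨by rw [← h.1]; exact h2, by rw [← h.2]; exact h3⟩ hcond
          · exact List.mem_cons_of_mem _ (ihm1.mpr ⟨a2, b2, h, h2, h3⟩)
      · intro y
        constructor
        · intro hm
          rcases List.mem_cons.mp hm with h | h
          · exact absurd (congrArg Prod.fst h).symm a.2
          · obtain ⟨a2, b2, h1, h2, h3, h4⟩ := (ihm2 y).mp h
            exact ⟨a2, b2, List.mem_cons_of_mem _ h1, h2, h3, h4⟩
        · rintro ⟨a2, b2, h1, h2, h3, h4⟩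
          rcases List.mem_cons.mp h1 with h | h
          · rw [Prod.ext_iff] at h; simp only at h
            exact absurd ⟨by rw [← h.1]; exact h2, by rw [← h.2]; exact h3⟩ hcond
          · exact List.mem_cons_of_mem _ ((ihm2 y).mpr ⟨a2, b2, h, h2, h3, h4⟩)
      · intro x y hxv hyv hnc
        constructor
        · intro hm
          rcases List.mem_cons.mp hm with h | h
          · rw [Prod.ext_iff] at h; simp only at h
            exact ⟨a, b, List.mem_cons_self .., h.1.symm, h.2.symm⟩
          · obtain ⟨a2, b2, h1, h2, h3⟩ := (ihm3 x y hxv hyv hnc).mp h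
            exact ⟨a2, b2, List.mem_cons_of_mem _ h1, h2, h3⟩
        · rintro ⟨a2, b2, h1, h2, h3⟩
          rcases List.mem_cons.mp h1 with h | h
          · rw [Prod.ext_iff] at h; simp only at h
            apply List.mem_cons.mpr
            left
            rw [Prod.ext_iff]; simp only
            exact ⟨by rw [← h2, h.1], by rw [← h3, h.2]⟩
          · exact List.mem_cons_of_mem _ ((ihm3 x y hxv hyv hnc).mpr ⟨a2, b2, h, h2, h3⟩)

def liftP (v : V) (p : List (V × V)) :
    List ({x : V // x ≠ v} × {x : V // x ≠ v}) :=
  p.filterMap (fun e =>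
    if h : e.1 ≠ v ∧ e.2 ≠ v then some (⟨e.1, h.1⟩, ⟨e.2, h.2⟩) else none)

lemma liftP_mem (v : V) (p : List (V × V)) (a b : {x : V // x ≠ v}) :
    (a, b) ∈ liftP v p ↔ (a.1, b.1) ∈ p := by
  rw [liftP, List.mem_filterMap]
  constructor
  · rintro ⟨e, he, hsome⟩
    split at hsome
    · rw [Option.some.injEq, Prod.ext_iff] at hsome
      obtain ⟨h1, h2⟩ := hsome
      have e1 : e.1 = a.1 := congrArg Subtype.val h1
      have e2 : e.2 = b.1 := congrArg Subtype.val h2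
      rwa [← e1, ← e2, Prod.mk.eta]
    · exact absurd hsome (by simp)
  · intro h
    refine ⟨(a.1, b.1), h, ?_⟩
    have : ((a.1, b.1).1 ≠ v ∧ (a.1, b.1).2 ≠ v) := ⟨a.2, b.2⟩
    rw [dif_pos this]

lemma liftP_proj (v : V) (p : List (V × V)) (hp : ∀ e ∈ p, e.1 ≠ v ∧ e.2 ≠ v) :
    (liftP v p).map (fun e => (e.1.1, e.2.1)) = p := by
  induction p with
  | nil => rfl
  | cons e rest ih =>
    have h := hp e (by simp)
    simp only [liftP, List.filterMap_cons, dif_pos h, List.map_cons]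
    rw [Prod.mk.eta]
    exact congrArg _ (ih (fun f hf => hp f (by simp [hf])))

lemma path_fst_topo {W : Type} (topo : W → ℕ) :
    ∀ (p : List (W × W)) (e : W × W),
    List.Chain' (fun e e' : W × W => e.2 = e'.1) (e :: p) →
    (∀ x ∈ e :: p, topo x.1 < topo x.2) →
    ∀ e' ∈ p, topo e.2 ≤ topo e'.1 := by
  intro p
  induction p with
  | nil => intro e _ _ e' he'; simp at he'
  | cons f rest ih =>
    intro e hch hlt e' he'
    rw [List.Chain', List.isChain_cons_cons] at hch
    rcases List.mem_cons.mp he' with h | h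
    · subst h; rw [hch.1]
    · refine le_trans (le_of_eq (congrArg topo hch.1)) (le_trans (le_of_lt (hlt f (by simp))) ?_)
      exact ih f hch.2 (fun x hx => hlt x (by simp [List.mem_cons] at hx ⊢; tauto)) e' h

lemma path_fst_inj {W : Type} (topo : W → ℕ) (E : W → W → Bool)
    (hlt : ∀ a b : W, E a b → topo a < topo b)
    (p : List (W × W))
    (hch : List.Chain' (fun e e' : W × W => e.2 = e'.1) p)
    (hE : ∀ e ∈ p, E e.1 e.2) :
    ∀ e ∈ p, ∀ e' ∈ p, e.1 = e'.1 → e = e' := by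
  have hpw : p.Pairwise (fun e e' : W × W => topo e.1 < topo e'.1) := by
    induction p with
    | nil => exact List.Pairwise.nil
    | cons e rest ih =>
      rw [List.pairwise_cons]
      rw [List.Chain', List.isChain_cons] at hch
      refine ⟨?_, ih hch.2 (fun x hx => hE x (by simp [hx]))⟩
      intro e' he'
      calc topo e.1 < topo e.2 := hlt _ _ (hE e (by simp))
        _ ≤ topo e'.1 := by
          rcases rest with _ | ⟨f, rest'⟩
          · simp at he'
          · exact path_fst_topo topo (f :: rest') e
              (List.isChain_cons.mpr hch) (fun x hx => hlt _ _ (hE x hx)) e' he'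
  have hpw' : p.Pairwise (fun e e' : W × W => e.1 ≠ e'.1) :=
    hpw.imp (fun h hab => absurd (congrArg topo hab) (Nat.ne_of_lt h))
  intro e he e' he' h
  by_contra hne
  haveI : Std.Symm (fun e e' : W × W => e.1 ≠ e'.1) := ⟨fun _ _ hx => Ne.symm hx⟩
  exact (List.Pairwise.forall hpw' he he' hne) h

lemma list_finset_swap {α β : Type} [DecidableEq β] (l : List α) (s : Finset β)
    (F : β → α → ℕ) :
    ∑ b ∈ s, (l.map (F b)).sum = (l.map (fun a => ∑ b ∈ s, F b a)).sum := by
  induction l with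
  | nil => simp
  | cons a l ih => simp [Finset.sum_add_distrib, ih]


/-- Y-to-V contraction preserves flow decompositions. -/
theorem y_to_v_correct (N : FlowNet V) (u v : V)
    (hvs : v ≠ N.s) (hvt : v ≠ N.t)
    (huv : N.E u v) (hin : ∀ a : V, N.E a v → a = u)
    (hnopar : ∀ b : V, N.E v b → ¬ N.E u b)
    (N' : FlowNet {x : V // x ≠ v})
    (hs : N'.s = ⟨N.s, Ne.symm hvs⟩) (ht : N'.t = ⟨N.t, Ne.symm hvt⟩)
    (hE : ∀ a b : {x : V // x ≠ v},
      N'.E a b = (N.E a.1 b.1 || (decide (a.1 = u) && N.E v b.1)))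
    (hf : ∀ a b : {x : V // x ≠ v}, N'.E a b →
      N'.f a b = if a.1 = u ∧ N.E v b.1 then N.f v b.1 else N.f a.1 b.1) :
    (∀ k : ℕ, (∃ D, IsFD N D ∧ D.length = k) ↔ (∃ D', IsFD N' D' ∧ D'.length = k)) ∧
    sInf {k : ℕ | ∃ D, IsFD N D ∧ D.length = k}
      = sInf {k : ℕ | ∃ D', IsFD N' D' ∧ D'.length = k} := by
  classical
  have huvne : u ≠ v := by
    intro h; subst h; exact lt_irrefl _ (N.topo_lt u u huv)
  have hvwne : ∀ w : V, N.E v w → w ≠ v := by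
    intro w hw h; subst h; exact lt_irrefl _ (N.topo_lt w w hw)
  -- per-path contraction facts
  have hpathC : ∀ p : List (V × V), IsSTPath N p →
      (∀ e ∈ contract v p, e.1 ≠ v ∧ e.2 ≠ v ∧ (N.E e.1 e.2 ∨ (e.1 = u ∧ N.E v e.2)))
      ∧ List.Chain' (fun e e' : V × V => e.2 = e'.1) (contract v p)
      ∧ (∀ x y : V, ((x,y) ∈ contract v p ↔
          ((x,y) ∈ p ∧ x ≠ v ∧ y ≠ v) ∨ (x = u ∧ (v,y) ∈ p))) := by
    intro p hst
    obtain ⟨⟨hne, hEp, hch⟩, hhd, hls⟩ := hst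
    apply contract_spec N u v hin p hch hEp
    · intro x y hxy
      have h2 : p.head?.map Prod.fst = some N.s := by rw [← List.head?_map]; exact hhd
      rw [hxy] at h2
      simp only [Option.map_some] at h2
      have : x = N.s := Option.some.inj h2
      intro h; rw [h] at this; exact hvs this
    · intro x y hxy
      have h2 : p.getLast?.map Prod.snd = some N.t := by rw [← List.getLast?_map]; exact hls
      rw [hxy] at h2
      simp only [Option.map_some] at h2
      have : y = N.t := Option.some.inj h2
      intro h; rw [h] at this; exact hvt this
  have fwd : ∀ D, IsFD N D →
      IsFD N' (D.map (fun pw => (liftP v (contract v pw.1), pw.2))) := by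
    intro D hD
    obtain ⟨hD1, hD2⟩ := hD
    constructor
    · intro pw' hq
      obtain ⟨pw, hpw, rfl⟩ := List.mem_map.mp hq
      obtain ⟨hst, hwpos⟩ := hD1 pw hpw
      obtain ⟨cs, cc, cm⟩ := hpathC pw.1 hst
      have hall : ∀ e ∈ contract v pw.1, e.1 ≠ v ∧ e.2 ≠ v :=
        fun e he => ⟨(cs e he).1, (cs e he).2.1⟩
      have hproj := liftP_proj v (contract v pw.1) hall
      have hq0ne : contract v pw.1 ≠ [] := contract_ne_nil v hst.1.1
      have hlne : liftP v (contract v pw.1) ≠ [] := by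
        intro h; rw [h] at hproj; exact hq0ne hproj.symm
      refine ⟨⟨⟨hlne, ?_, ?_⟩, ?_, ?_⟩, hwpos⟩
      · rintro ⟨a, b⟩ he
        rw [liftP_mem] at he
        rw [hE a b]
        simp only [Bool.or_eq_true, Bool.and_eq_true, decide_eq_true_eq]
        rcases (cs _ he).2.2 with h | ⟨h1, h2⟩
        · exact Or.inl h
        · exact Or.inr ⟨h1, h2⟩
      · have cc' : List.Chain' (fun e e' : V × V => e.2 = e'.1)
            ((liftP v (contract v pw.1)).map (fun e => (e.1.1, e.2.1))) := by
          rw [hproj]; exact cc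
        rw [List.Chain', List.isChain_map] at cc'
        exact cc'.imp (fun {a b} h => Subtype.ext h)
      · rw [List.head?_map]
        have h1 := contract_head v pw.1
        have h2 : pw.1.head?.map Prod.fst = some N.s := by
          rw [← List.head?_map]; exact hst.2.1
        have h3 : ((liftP v (contract v pw.1)).map (fun e => (e.1.1, e.2.1))).head?
            = (contract v pw.1).head? := by rw [hproj]
        rw [List.head?_map] at h3
        cases hl : (liftP v (contract v pw.1)).head? with
        | none => exact absurd (List.head?_eq_none_iff.mp hl) hlne
        | some ab =>
          rw [hl] at h3
          have h4 : (contract v pw.1).head?.map Prod.fst = some N.s := h1.trans h2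
          rw [← h3] at h4
          simp only [Option.map_some] at h4
          have h5 : ab.1.1 = N.s := Option.some.inj h4
          simp only [Option.map_some]
          congr 1
          rw [hs]
          exact Subtype.ext h5
      · rw [List.getLast?_map]
        have h1 := contract_last v pw.1
        have h2 : pw.1.getLast?.map Prod.snd = some N.t := by
          rw [← List.getLast?_map]; exact hst.2.2
        have h3 : ((liftP v (contract v pw.1)).map (fun e => (e.1.1, e.2.1))).getLast?
            = (contract v pw.1).getLast? := by rw [hproj]
        rw [List.getLast?_map] at h3
        cases hl : (liftP v (contract v pw.1)).getLast? with
        | none =>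
          rw [List.getLast?_eq_none_iff] at hl
          exact absurd hl hlne
        | some ab =>
          rw [hl] at h3
          have h4 : (contract v pw.1).getLast?.map Prod.snd = some N.t := h1.trans h2
          rw [← h3] at h4
          simp only [Option.map_some] at h4
          have h5 : ab.2.1 = N.t := Option.some.inj h4
          simp only [Option.map_some]
          congr 1
          rw [ht]
          exact Subtype.ext h5
    · intro a b hab
      rw [List.map_map]
      by_cases hcase : N.E a.1 b.1
      · have hnc : ¬(a.1 = u ∧ N.E v b.1) := by
          rintro ⟨h1, h2⟩; exact hnopar b.1 h2 (h1 ▸ hcase)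
        have heq : D.map ((fun pw : List ({x : V // x ≠ v} × {x : V // x ≠ v}) × ℕ =>
              if (a, b) ∈ pw.1 then pw.2 else 0) ∘
            (fun pw => (liftP v (contract v pw.1), pw.2)))
            = D.map (fun pw => if (a.1, b.1) ∈ pw.1 then pw.2 else 0) := by
          apply List.map_congr_left
          intro pw hpw
          obtain ⟨hst, _⟩ := hD1 pw hpw
          obtain ⟨cs, cc, cm⟩ := hpathC pw.1 hst
          simp only [Function.comp_apply]
          have hm : (a, b) ∈ liftP v (contract v pw.1) ↔ (a.1, b.1) ∈ pw.1 := by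
            rw [liftP_mem, cm a.1 b.1]
            constructor
            · rintro (⟨h, _, _⟩ | ⟨h1, h2⟩)
              · exact h
              · exact absurd (h1 ▸ hcase) (hnopar b.1 (hst.1.2.1 (v, b.1) h2))
            · intro h; exact Or.inl ⟨h, a.2, b.2⟩
          rw [if_congr hm rfl rfl]
        rw [hf a b hab, if_neg hnc, ← hD2 a.1 b.1 hcase]
        convert congrArg List.sum heq
      · have hnew : a.1 = u ∧ N.E v b.1 := by
          have h := hab
          rw [hE a b] at h
          simp only [Bool.or_eq_true, Bool.and_eq_true, decide_eq_true_eq] at h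
          rcases h with h | h
          · exact absurd h hcase
          · exact h
        have heq : D.map ((fun pw : List ({x : V // x ≠ v} × {x : V // x ≠ v}) × ℕ =>
              if (a, b) ∈ pw.1 then pw.2 else 0) ∘
            (fun pw => (liftP v (contract v pw.1), pw.2)))
            = D.map (fun pw => if (v, b.1) ∈ pw.1 then pw.2 else 0) := by
          apply List.map_congr_left
          intro pw hpw
          obtain ⟨hst, _⟩ := hD1 pw hpw
          obtain ⟨cs, cc, cm⟩ := hpathC pw.1 hst
          simp only [Function.comp_apply]
          have hm : (a, b) ∈ liftP v (contract v pw.1) ↔ (v, b.1) ∈ pw.1 := by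
            rw [liftP_mem, cm a.1 b.1]
            constructor
            · rintro (⟨h, _, _⟩ | ⟨h1, h2⟩)
              · exact absurd (hst.1.2.1 (a.1, b.1) h) hcase
              · exact h2
            · intro h; exact Or.inr ⟨hnew.1, h⟩
          rw [if_congr hm rfl rfl]
        rw [hf a b hab, if_pos hnew, ← hD2 v b.1 hnew.2]
        convert congrArg List.sum heq
  have bwd : ∀ D', IsFD N' D' →
      IsFD N (D'.map (fun pw => (expand u v (N.E v) pw.1, pw.2))) := by
    intro D' hD'
    obtain ⟨hD1, hD2⟩ := hD'
    have hpathX : ∀ p', IsSTPath N' p' →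
        (∀ e ∈ expand u v (N.E v) p', N.E e.1 e.2)
        ∧ List.Chain' (fun e e' : V × V => e.2 = e'.1) (expand u v (N.E v) p')
        ∧ ((u, v) ∈ expand u v (N.E v) p' ↔
            ∃ a b : {x : V // x ≠ v}, (a, b) ∈ p' ∧ a.1 = u ∧ N.E v b.1)
        ∧ (∀ y : V, (v, y) ∈ expand u v (N.E v) p' ↔
            ∃ a b : {x : V // x ≠ v}, (a, b) ∈ p' ∧ a.1 = u ∧ N.E v b.1 ∧ b.1 = y)
        ∧ (∀ x y : V, x ≠ v → y ≠ v → ¬(x = u ∧ N.E v y) →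
            ((x, y) ∈ expand u v (N.E v) p' ↔
              ∃ a b : {x : V // x ≠ v}, (a, b) ∈ p' ∧ a.1 = x ∧ b.1 = y)) :=
      fun p' hst => expand_spec N u v N' huv huvne hE p' hst.1.2.2 hst.1.2.1
    constructor
    · intro pw' hq
      obtain ⟨pw, hpw, rfl⟩ := List.mem_map.mp hq
      obtain ⟨hst, hwpos⟩ := hD1 pw hpw
      obtain ⟨xE, xc, m1, m2, m3⟩ := hpathX pw.1 hst
      refine ⟨⟨⟨expand_ne_nil u v _ hst.1.1, xE, xc⟩, ?_, ?_⟩, hwpos⟩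
      · rw [List.head?_map]
        have h1 := expand_head u v (N.E v) pw.1
        have h2 : pw.1.head?.map Prod.fst = some N'.s := by
          rw [← List.head?_map]; exact hst.2.1
        have h3 : pw.1.head?.map (fun e => e.1.1) = some N.s := by
          have h4 := congrArg (Option.map Subtype.val) h2
          rw [Option.map_map, hs] at h4
          exact h4
        rw [h1, h3]
      · rw [List.getLast?_map]
        have h1 := expand_last u v (N.E v) pw.1
        have h2 : pw.1.getLast?.map Prod.snd = some N'.t := by
          rw [← List.getLast?_map]; exact hst.2.2
        have h3 : pw.1.getLast?.map (fun e => e.2.1) = some N.t := by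
          have h4 := congrArg (Option.map Subtype.val) h2
          rw [Option.map_map, ht] at h4
          exact h4
        rw [h1, h3]
    · intro x y hxy
      rw [List.map_map]
      by_cases hyv : y = v
      · have hxu : x = u := hin x (hyv ▸ hxy)
        rw [hxu, hyv]
        -- conservation at v
        have hfin : Finset.univ.filter (fun a : V => N.E a v) = {u} := by
          ext a
          simp only [Finset.mem_filter, Finset.mem_univ, true_and, Finset.mem_singleton]
          exact ⟨fun h => hin a h, fun h => h ▸ huv⟩
        have hcons := N.conservation v hvs hvt
        rw [hfin, Finset.sum_singleton] at hcons
        rw [hcons]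
        have hTsum : ∑ w ∈ Finset.univ.filter (fun w : V => N.E v w), N.f v w
            = ∑ w ∈ Finset.univ.filter
                (fun w : {z : V // z ≠ v} => N.E v w.1), N'.f ⟨u, huvne⟩ w := by
          rw [Finset.sum_bij' (i := fun (w : V) (hw : w ∈ Finset.univ.filter
                (fun w : V => N.E v w)) =>
              (⟨w, hvwne w (Finset.mem_filter.mp hw).2⟩ : {z : V // z ≠ v}))
            (j := fun w _ => w.1)]
          · intro w hw
            simp only [Finset.mem_filter, Finset.mem_univ, true_and] at hw ⊢
            exact hw
          · intro w hw
            simp only [Finset.mem_filter, Finset.mem_univ, true_and] at hw ⊢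
            exact hw
          · intro w hw; rfl
          · intro w hw; exact Subtype.ext rfl
          · intro w hw
            have hwv : w ≠ v := hvwne w (Finset.mem_filter.mp hw).2
            have hEw : N'.E ⟨u, huvne⟩ ⟨w, hwv⟩ := by
              rw [hE]; simp [(Finset.mem_filter.mp hw).2]
            rw [hf _ _ hEw, if_pos ⟨rfl, (Finset.mem_filter.mp hw).2⟩]
        rw [hTsum]
        have hsum2 : ∑ w ∈ Finset.univ.filter
              (fun w : {z : V // z ≠ v} => N.E v w.1), N'.f ⟨u, huvne⟩ w
            = ∑ w ∈ Finset.univ.filter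
              (fun w : {z : V // z ≠ v} => N.E v w.1),
                (D'.map (fun pw => if ((⟨u, huvne⟩ : {z : V // z ≠ v}), w) ∈ pw.1
                  then pw.2 else 0)).sum := by
          apply Finset.sum_congr rfl
          intro w hw
          have hEw : N'.E ⟨u, huvne⟩ w := by
            rw [hE]; simp [(Finset.mem_filter.mp hw).2]
          convert (hD2 _ _ hEw).symm
        rw [hsum2, list_finset_swap]
        symm
        apply congrArg List.sum
        apply List.map_congr_left
        intro pw hpw
        obtain ⟨hst, _⟩ := hD1 pw hpw
        obtain ⟨xE, xc, m1, m2, m3⟩ := hpathX pw.1 hst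
        simp only [Function.comp_apply]
        by_cases hex : (u, v) ∈ expand u v (N.E v) pw.1
        · rw [if_pos hex]
          obtain ⟨a2, b2, hmem, ha2, hb2⟩ := m1.mp hex
          have ha2' : a2 = ⟨u, huvne⟩ := Subtype.ext ha2
          rw [ha2'] at hmem
          have hb2T : b2 ∈ Finset.univ.filter
              (fun w : {z : V // z ≠ v} => N.E v w.1) := by
            simp only [Finset.mem_filter, Finset.mem_univ, true_and]
            exact hb2
          rw [Finset.sum_eq_single_of_mem b2 hb2T]
          · rw [if_pos hmem]
          · intro c hc hne
            rw [if_neg]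
            intro hcmem
            have := path_fst_inj N'.topo N'.E N'.topo_lt pw.1 hst.1.2.2 hst.1.2.1
              (⟨u, huvne⟩, c) hcmem (⟨u, huvne⟩, b2) hmem rfl
            exact hne (congrArg Prod.snd this)
        · rw [if_neg hex, Finset.sum_eq_zero]
          intro c hc
          rw [if_neg]
          intro hcmem
          exact hex (m1.mpr ⟨⟨u, huvne⟩, c, hcmem, rfl, (Finset.mem_filter.mp hc).2⟩)
      · by_cases hxv : x = v
        · rw [hxv]
          have hvy : N.E v y := hxv ▸ hxy
          have hy2 : y ≠ v := hyv
          have hEuy : N'.E ⟨u, huvne⟩ ⟨y, hy2⟩ := by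
            rw [hE]; simp [hvy]
          have heq : D'.map ((fun pw : List (V × V) × ℕ =>
                if (v, y) ∈ pw.1 then pw.2 else 0) ∘
              (fun pw => (expand u v (N.E v) pw.1, pw.2)))
              = D'.map (fun pw =>
                  if ((⟨u, huvne⟩ : {z : V // z ≠ v}), (⟨y, hy2⟩ : {z : V // z ≠ v})) ∈ pw.1
                  then pw.2 else 0) := by
            apply List.map_congr_left
            intro pw hpw
            obtain ⟨hst, _⟩ := hD1 pw hpw
            obtain ⟨xE, xc, m1, m2, m3⟩ := hpathX pw.1 hst
            simp only [Function.comp_apply]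
            have hm : (v, y) ∈ expand u v (N.E v) pw.1 ↔
                ((⟨u, huvne⟩ : {z : V // z ≠ v}), (⟨y, hy2⟩ : {z : V // z ≠ v})) ∈ pw.1 := by
              rw [m2 y]
              constructor
              · rintro ⟨a2, b2, hmem, ha2, hb2, hb2y⟩
                have : a2 = ⟨u, huvne⟩ := Subtype.ext ha2
                have hb : b2 = ⟨y, hy2⟩ := Subtype.ext hb2y
                rw [← this, ← hb]
                exact hmem
              · intro h
                exact ⟨⟨u, huvne⟩, ⟨y, hy2⟩, h, rfl, hvy, rfl⟩
            rw [if_congr hm rfl rfl]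
          rw [heq]
          have h815 := hD2 _ _ hEuy
          rw [hf _ _ hEuy, if_pos ⟨rfl, hvy⟩] at h815
          convert h815
        · have hnc : ¬(x = u ∧ N.E v y) := by
            rintro ⟨h1, h2⟩; exact hnopar y h2 (h1 ▸ hxy)
          have hExy : N'.E ⟨x, hxv⟩ ⟨y, hyv⟩ := by
            rw [hE]; simp [hxy]
          have heq : D'.map ((fun pw : List (V × V) × ℕ =>
                if (x, y) ∈ pw.1 then pw.2 else 0) ∘
              (fun pw => (expand u v (N.E v) pw.1, pw.2)))
              = D'.map (fun pw =>
                  if ((⟨x, hxv⟩ : {z : V // z ≠ v}), (⟨y, hyv⟩ : {z : V // z ≠ v})) ∈ pw.1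
                  then pw.2 else 0) := by
            apply List.map_congr_left
            intro pw hpw
            obtain ⟨hst, _⟩ := hD1 pw hpw
            obtain ⟨xE, xc, m1, m2, m3⟩ := hpathX pw.1 hst
            simp only [Function.comp_apply]
            have hm : (x, y) ∈ expand u v (N.E v) pw.1 ↔
                ((⟨x, hxv⟩ : {z : V // z ≠ v}), (⟨y, hyv⟩ : {z : V // z ≠ v})) ∈ pw.1 := by
              rw [m3 x y hxv hyv hnc]
              constructor
              · rintro ⟨a2, b2, hmem, ha2, hb2⟩
                have h1 : a2 = ⟨x, hxv⟩ := Subtype.ext ha2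
                have h2 : b2 = ⟨y, hyv⟩ := Subtype.ext hb2
                rw [← h1, ← h2]
                exact hmem
              · intro h
                exact ⟨⟨x, hxv⟩, ⟨y, hyv⟩, h, rfl, rfl⟩
            rw [if_congr hm rfl rfl]
          rw [heq]
          have h843 := hD2 _ _ hExy
          rw [hf _ _ hExy, if_neg hnc] at h843
          convert h843
  have main : ∀ k : ℕ, (∃ D, IsFD N D ∧ D.length = k) ↔
      (∃ D', IsFD N' D' ∧ D'.length = k) := by
    intro k
    constructor
    · rintro ⟨D, h1, rfl⟩
      exact ⟨_, fwd D h1, by simp⟩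
    · rintro ⟨D', h1, rfl⟩
      exact ⟨_, bwd D' h1, by simp⟩
  refine ⟨main, ?_⟩
  have hset : {k : ℕ | ∃ D, IsFD N D ∧ D.length = k}
      = {k : ℕ | ∃ D', IsFD N' D' ∧ D'.length = k} := Set.ext main
  rw [hset]
end

section
/- The minimum flow decomposition size of a flow network equals the minimum over k of those k for which there exist binary variables x_{e,i} (e ∈ E, 1 ≤ i ≤ k) and positive integer weights w_i satisfying: for each i, the x_{·,i} describe an s-t path (unit out-flow at s, unit in-flow at t, balanced at internal nodes), and for each edge e, f(e) = Σ_i x_{e,i} w_i. That is, the ILP formulation of Dias et al. exactly characterizes flow decompositions. -/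
variable {V : Type} [Fintype V] [DecidableEq V]

/-- Feasibility of the ILP of Dias et al. for `k`-flow decomposition: binary
edge variables `x i` describing, for each `i`, an `s`-`t` path via degree
constraints, together with positive weights `w i` whose superposition is `f`. -/
def ILPFeasible (N : FlowNet V) (k : ℕ) (x : Fin k → V × V → Bool)
    (w : Fin k → ℕ) : Prop :=
  (∀ i : Fin k, 0 < w i) ∧
  (∀ i : Fin k, ∀ e : V × V, x i e → N.E e.1 e.2) ∧
  (∀ i : Fin k, ∀ v : V,
    ((∑ z ∈ Finset.univ.filter (fun z : V => N.E v z),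
        (if x i (v, z) then (1 : ℤ) else 0))
      - ∑ z ∈ Finset.univ.filter (fun z : V => N.E z v),
        (if x i (z, v) then (1 : ℤ) else 0))
      = if v = N.s then 1 else if v = N.t then -1 else 0) ∧
  ∀ a b : V, N.E a b →
    (N.f a b : ℤ) = ∑ i : Fin k, (if x i (a, b) then (w i : ℤ) else 0)

namespace ILPmfd

/-- topo of the head dominates all the firsts along a chain. -/
lemma topo_head_le (N : FlowNet V) :
    ∀ (u c : V) (rest : List (V × V)),
      (∀ e ∈ (u, c) :: rest, N.E e.1 e.2) →
      List.Chain' (fun e e' : V × V => e.2 = e'.1) ((u, c) :: rest) →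
      ∀ e ∈ rest, N.topo c ≤ N.topo e.1 := by
  intro u c rest
  induction rest generalizing u c with
  | nil => intro _ _ e he; simp at he
  | cons hd tl ih =>
    intro hE hch e he
    have hcd : c = hd.1 := (List.isChain_cons_cons.mp hch).1
    subst hcd
    rcases List.mem_cons.mp he with he | he
    · subst he; omega
    · have h1 : N.topo hd.2 ≤ N.topo e.1 := by
        apply ih hd.1 hd.2 _ _ e he
        · intro e' he'; apply hE; rcases List.mem_cons.mp he' with h | h
          · simp [h]
          · exact List.mem_cons_of_mem _ (List.mem_cons_of_mem _ h)
        · have := (List.isChain_cons_cons.mp hch).2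
          rwa [show hd = (hd.1, hd.2) from rfl] at this
      have h2 : N.topo hd.1 < N.topo hd.2 :=
        N.topo_lt _ _ (hE hd (by simp))
      omega

lemma sum_ite_out (N : FlowNet V) (u c v : V) (h : N.E u c) :
    (∑ z ∈ Finset.univ.filter (fun z : V => N.E v z),
      (if ((v, z) : V × V) = (u, c) then (1 : ℤ) else 0)) = if v = u then 1 else 0 := by
  simp only [Prod.mk.injEq]
  by_cases hv : v = u
  · subst hv
    simp only [true_and, if_pos rfl]
    rw [Finset.sum_ite_eq' (Finset.univ.filter fun z : V => N.E v z) c (fun _ => (1 : ℤ))]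
    simp [h]
  · simp [hv]

lemma sum_ite_in (N : FlowNet V) (u c v : V) (h : N.E u c) :
    (∑ z ∈ Finset.univ.filter (fun z : V => N.E z v),
      (if ((z, v) : V × V) = (u, c) then (1 : ℤ) else 0)) = if v = c then 1 else 0 := by
  simp only [Prod.mk.injEq]
  by_cases hv : v = c
  · subst hv
    simp only [and_true, if_pos rfl]
    rw [Finset.sum_ite_eq' (Finset.univ.filter fun z : V => N.E z v) u (fun _ => (1 : ℤ))]
    simp [h]
  · simp [hv]

/-- Degree identity for a path from `a` to `b`. -/
lemma path_degree (N : FlowNet V) :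
    ∀ (p : List (V × V)) (a b : V), p ≠ [] →
      (∀ e ∈ p, N.E e.1 e.2) →
      List.Chain' (fun e e' : V × V => e.2 = e'.1) p →
      (p.map Prod.fst).head? = some a →
      (p.map Prod.snd).getLast? = some b →
      ∀ v : V,
      ((∑ z ∈ Finset.univ.filter (fun z : V => N.E v z),
          (if (v, z) ∈ p then (1 : ℤ) else 0))
        - ∑ z ∈ Finset.univ.filter (fun z : V => N.E z v),
          (if (z, v) ∈ p then (1 : ℤ) else 0))
        = if v = a then 1 else if v = b then -1 else 0 := by
  intro p
  induction p with
  | nil => intro a b hne; exact absurd rfl hne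
  | cons hd tl ih =>
    obtain ⟨u, c⟩ := hd
    intro a b _ hE hch ha hb v
    have hau : a = u := by simp at ha; exact ha.symm
    rw [hau]
    have huc : N.E u c := hE (u, c) (by simp)
    have htuc : N.topo u < N.topo c := N.topo_lt _ _ huc
    cases tl with
    | nil =>
      have hbc : c = b := by simpa using hb
      subst hbc
      simp only [List.mem_singleton]
      rw [sum_ite_out N u c v huc, sum_ite_in N u c v huc]
      have hne' : u ≠ c := by intro h; rw [h] at htuc; exact lt_irrefl _ htuc
      split_ifs with h1 h2 h3 <;> simp_all
    | cons hd2 tl2 =>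
      set rest := hd2 :: tl2 with hrest
      have hcd : c = hd2.1 := (List.isChain_cons_cons.mp hch).1
      have hErest : ∀ e ∈ rest, N.E e.1 e.2 := fun e he => hE e (List.mem_cons_of_mem _ he)
      have hchrest : List.Chain' (fun e e' : V × V => e.2 = e'.1) rest :=
        (List.isChain_cons_cons.mp hch).2
      have harest : (rest.map Prod.fst).head? = some c := by
        simp [hrest, hcd]
      have hbrest : (rest.map Prod.snd).getLast? = some b := by
        simpa [hrest, List.getLast?_cons_cons] using hb
      have IH := ih c b (by simp [hrest]) hErest hchrest harest hbrest v
      have hle := topo_head_le N u c rest hE hch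
      -- b is the second coordinate of the last edge of rest
      have hbne : ∃ el ∈ rest, el.2 = b := by
        have h1 : (rest.map Prod.snd).getLast? = rest.getLast?.map Prod.snd := by
          rw [List.getLast?_map]
        rw [h1] at hbrest
        rcases hrest2 : rest.getLast? with _ | el
        · rw [hrest2] at hbrest; simp at hbrest
        · rw [hrest2] at hbrest
          have hmem' : el ∈ rest.getLast? := by simp [hrest2]
          obtain ⟨hh, heq⟩ := List.mem_getLast?_eq_getLast hmem'
          exact ⟨el, heq ▸ List.getLast_mem hh, by simpa using hbrest⟩
      obtain ⟨el, helmem, helb⟩ := hbne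
      have htcb : N.topo c < N.topo b := by
        have h1 := hle el helmem
        have h2 := N.topo_lt el.1 el.2 (hErest el helmem)
        rw [helb] at h2
        omega
      have hnotmem : ((u, c) : V × V) ∉ rest := by
        intro h
        have := hle (u, c) h
        simp at this; omega
      have key : ∀ e : V × V,
          (if e ∈ (u, c) :: rest then (1 : ℤ) else 0)
            = (if e = (u, c) then 1 else 0) + (if e ∈ rest then 1 else 0) := by
        intro e
        by_cases h1 : e = (u, c)
        · subst h1; simp [hnotmem]
        · by_cases h2 : e ∈ rest <;> simp [h1, h2]
      simp only [key,  Finset.sum_add_distrib]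
      rw [sum_ite_out N u c v huc, sum_ite_in N u c v huc]
      have hneuc : u ≠ c := by intro h; rw [h] at htuc; exact lt_irrefl _ htuc
      have hneub : u ≠ b := by intro h; rw [h] at htuc; omega
      have hnecb : c ≠ b := by intro h; rw [h] at htcb; exact lt_irrefl _ htcb
      clear ih hE hch ha hb hErest hchrest harest hbrest hle key helmem helb hnotmem hcd
      by_cases h1 : v = u <;> by_cases h2 : v = c <;> by_cases h3 : v = b <;>
        simp_all <;> omega

/-- From a positive out-sum extract an explicit out-edge. -/
lemma exists_of_sum_pos (N : FlowNet V) (x : V × V → Bool) (v : V)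
    (h : 0 < ∑ z ∈ Finset.univ.filter (fun z : V => N.E v z),
        (if x (v, z) then (1 : ℤ) else 0)) :
    ∃ w : V, x (v, w) = true ∧ N.E v w := by
  by_contra hcon
  push_neg at hcon
  have hz : (∑ z ∈ Finset.univ.filter (fun z : V => N.E v z),
      (if x (v, z) then (1 : ℤ) else 0)) = 0 := by
    apply Finset.sum_eq_zero
    intro z hz
    have hE : N.E v z := (Finset.mem_filter.mp hz).2
    by_cases hxz : x (v, z) = true
    · exact absurd hE (by simpa using hcon z hxz)
    · simp [hxz]
  omega

/-- Balance at a vertex with an incoming support edge (or at `s`) yields an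
outgoing support edge. -/
lemma exists_out (N : FlowNet V) (x : V × V → Bool)
    (hx : ∀ e : V × V, x e = true → N.E e.1 e.2)
    (hbal : ∀ v : V,
      ((∑ z ∈ Finset.univ.filter (fun z : V => N.E v z),
          (if x (v, z) then (1 : ℤ) else 0))
        - ∑ z ∈ Finset.univ.filter (fun z : V => N.E z v),
          (if x (z, v) then (1 : ℤ) else 0))
        = if v = N.s then 1 else if v = N.t then -1 else 0)
    (v : V) (hvt : v ≠ N.t) (hv : v = N.s ∨ ∃ u, x (u, v) = true) :
    ∃ w : V, x (v, w) = true ∧ N.E v w := by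
  have hb := hbal v
  apply exists_of_sum_pos
  rcases hv with hv | ⟨u, hu⟩
  · subst hv
    have hin : (Finset.univ.filter (fun z : V => N.E z N.s)) = ∅ := by
      ext z; simp [N.s_no_in]
    rw [if_pos rfl, hin] at hb
    simp only [Finset.sum_empty, sub_zero] at hb
    omega
  · have hEuv : N.E u v := hx (u, v) hu
    have hmem : u ∈ Finset.univ.filter (fun z : V => N.E z v) := by
      simp [hEuv]
    have hin : (1 : ℤ) ≤ ∑ z ∈ Finset.univ.filter (fun z : V => N.E z v),
        (if x (z, v) then (1 : ℤ) else 0) := by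
      have h1 := Finset.single_le_sum
        (f := fun z => if x (z, v) then (1 : ℤ) else 0)
        (fun z _ => by positivity) hmem
      rwa [if_pos hu] at h1
    by_cases hvs : v = N.s
    · exact absurd (hx (u, v) hu) (by subst hvs; exact fun h => N.s_no_in u h)
    · rw [if_neg hvs, if_neg hvt] at hb; omega

/-- From any vertex reachable in the support, one can continue to `t`. -/
lemma exists_path_from (N : FlowNet V) (x : V × V → Bool)
    (hx : ∀ e : V × V, x e = true → N.E e.1 e.2)
    (hbal : ∀ v : V,
      ((∑ z ∈ Finset.univ.filter (fun z : V => N.E v z),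
          (if x (v, z) then (1 : ℤ) else 0))
        - ∑ z ∈ Finset.univ.filter (fun z : V => N.E z v),
          (if x (z, v) then (1 : ℤ) else 0))
        = if v = N.s then 1 else if v = N.t then -1 else 0) :
    ∀ n : ℕ, ∀ v : V,
      (Finset.univ.filter (fun u : V => N.topo v < N.topo u)).card ≤ n →
      v ≠ N.t → (v = N.s ∨ ∃ u, x (u, v) = true) →
      ∃ p : List (V × V), p ≠ [] ∧ (∀ e ∈ p, x e = true) ∧
        List.Chain' (fun e e' : V × V => e.2 = e'.1) p ∧
        (p.map Prod.fst).head? = some v ∧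
        (p.map Prod.snd).getLast? = some N.t := by
  intro n
  induction n with
  | zero =>
    intro v hcard hvt hv
    obtain ⟨w, hw, hE⟩ := exists_out N x hx hbal v hvt hv
    have : w ∈ Finset.univ.filter (fun u : V => N.topo v < N.topo u) := by
      simp [N.topo_lt v w hE]
    have := Finset.card_pos.mpr ⟨w, this⟩
    omega
  | succ n ihn =>
    intro v hcard hvt hv
    obtain ⟨w, hw, hE⟩ := exists_out N x hx hbal v hvt hv
    by_cases hwt : w = N.t
    · subst hwt
      exact ⟨[(v, N.t)], by simp, by simpa using hw, List.isChain_singleton _, by simp, by simp⟩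
    · have hsub : (Finset.univ.filter (fun u : V => N.topo w < N.topo u))
          ⊂ (Finset.univ.filter (fun u : V => N.topo v < N.topo u)) := by
        have htvw := N.topo_lt v w hE
        constructor
        · intro z hz
          simp only [Finset.mem_filter, Finset.mem_univ, true_and] at hz ⊢
          omega
        · intro hss
          have := hss (by simp [htvw] : w ∈ _)
          simp at this
      have hlt := Finset.card_lt_card hsub
      obtain ⟨p, hpne, hpx, hpch, hph, hpl⟩ :=
        ihn w (by omega) hwt (Or.inr ⟨v, hw⟩)
      refine ⟨(v, w) :: p, by simp, ?_, ?_, ?_, ?_⟩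
      · intro e he
        rcases List.mem_cons.mp he with h | h
        · subst h; exact hw
        · exact hpx e h
      · refine List.isChain_cons.mpr ?_
        refine ⟨?_, hpch⟩
        intro e' he'
        cases p with
        | nil => simp at hpne
        | cons q qs =>
          simp at he'
          subst he'
          exact (show q.1 = w by simpa using hph).symm
      · simp
      · cases p with
        | nil => simp at hpne
        | cons q qs => simpa [List.getLast?_cons_cons] using hpl

/-- A balanced `{0,1}`-circulation supported on edges of a DAG is empty. -/
lemma no_circulation (N : FlowNet V) (g : V × V → Bool)
    (hgE : ∀ e : V × V, g e = true → N.E e.1 e.2)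
    (hgbal : ∀ v : V,
      ((∑ z ∈ Finset.univ.filter (fun z : V => N.E v z),
          (if g (v, z) then (1 : ℤ) else 0))
        - ∑ z ∈ Finset.univ.filter (fun z : V => N.E z v),
          (if g (z, v) then (1 : ℤ) else 0)) = 0) :
    ∀ e : V × V, g e = false := by
  have key : ∀ n : ℕ, ∀ v : V,
      (Finset.univ.filter (fun u : V => N.topo v < N.topo u)).card ≤ n →
      ∀ u : V, g (u, v) = true → False := by
    intro n
    induction n with
    | zero =>
      intro v hcard u hguv
      -- v has an incoming edge, hence an outgoing one
      have hEuv : N.E u v := hgE (u, v) hguv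
      have hmem : u ∈ Finset.univ.filter (fun z : V => N.E z v) := by simp [hEuv]
      have hin : (1 : ℤ) ≤ ∑ z ∈ Finset.univ.filter (fun z : V => N.E z v),
          (if g (z, v) then (1 : ℤ) else 0) := by
        have h1 := Finset.single_le_sum
          (f := fun z => if g (z, v) then (1 : ℤ) else 0)
          (fun z _ => by positivity) hmem
        rwa [if_pos hguv] at h1
      have hb := hgbal v
      obtain ⟨w, hgw, hEw⟩ := exists_of_sum_pos N g v (by omega)
      have : w ∈ Finset.univ.filter (fun u : V => N.topo v < N.topo u) := by
        simp [N.topo_lt v w hEw]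
      have := Finset.card_pos.mpr ⟨w, this⟩
      omega
    | succ n ihn =>
      intro v hcard u hguv
      have hEuv : N.E u v := hgE (u, v) hguv
      have hmem : u ∈ Finset.univ.filter (fun z : V => N.E z v) := by simp [hEuv]
      have hin : (1 : ℤ) ≤ ∑ z ∈ Finset.univ.filter (fun z : V => N.E z v),
          (if g (z, v) then (1 : ℤ) else 0) := by
        have h1 := Finset.single_le_sum
          (f := fun z => if g (z, v) then (1 : ℤ) else 0)
          (fun z _ => by positivity) hmem
        rwa [if_pos hguv] at h1
      have hb := hgbal v
      obtain ⟨w, hgw, hEw⟩ := exists_of_sum_pos N g v (by omega)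
      have hsub : (Finset.univ.filter (fun u : V => N.topo w < N.topo u))
          ⊂ (Finset.univ.filter (fun u : V => N.topo v < N.topo u)) := by
        have htvw := N.topo_lt v w hEw
        constructor
        · intro z hz
          simp only [Finset.mem_filter, Finset.mem_univ, true_and] at hz ⊢
          omega
        · intro hss
          have := hss (by simp [htvw] : w ∈ _)
          simp at this
      have hlt := Finset.card_lt_card hsub
      exact ihn w (by omega) v hgw
  intro e
  by_contra hcon
  have hge : g e = true := by
    cases h : g e
    · exact absurd h hcon
    · rfl
  exact key (Finset.univ.filter (fun u : V => N.topo e.2 < N.topo u)).card e.2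
    le_rfl e.1 (by rwa [show ((e.1, e.2) : V × V) = e from rfl])

/-- The degree constraints force the support of `x` to be exactly an
`s`-`t` path. -/
lemma support_path (N : FlowNet V) (x : V × V → Bool)
    (hx : ∀ e : V × V, x e = true → N.E e.1 e.2)
    (hbal : ∀ v : V,
      ((∑ z ∈ Finset.univ.filter (fun z : V => N.E v z),
          (if x (v, z) then (1 : ℤ) else 0))
        - ∑ z ∈ Finset.univ.filter (fun z : V => N.E z v),
          (if x (z, v) then (1 : ℤ) else 0))
        = if v = N.s then 1 else if v = N.t then -1 else 0) :
    ∃ p : List (V × V), IsSTPath N p ∧ ∀ e : V × V, x e = true ↔ e ∈ p := by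
  have hst : N.s ≠ N.t := by
    intro h
    have hb := hbal N.s
    rw [if_pos rfl] at hb
    have h1 : Finset.univ.filter (fun z : V => N.E N.s z) = ∅ := by
      ext z; simp; rw [h]; simpa using N.t_no_out z
    have h2 : Finset.univ.filter (fun z : V => N.E z N.s) = ∅ := by
      ext z; simpa using N.s_no_in z
    rw [h1, h2] at hb
    simp at hb
  obtain ⟨p, hpne, hpx, hpch, hph, hpl⟩ :=
    exists_path_from N x hx hbal
      (Finset.univ.filter (fun u : V => N.topo N.s < N.topo u)).card
      N.s le_rfl hst (Or.inl rfl)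
  have hE : ∀ e ∈ p, N.E e.1 e.2 := fun e he => hx e (hpx e he)
  refine ⟨p, ⟨⟨hpne, hE, hpch⟩, hph, hpl⟩, ?_⟩
  -- the support is exactly p
  set g : V × V → Bool := fun e => x e && !(decide (e ∈ p)) with hg
  have hgx : ∀ e : V × V, g e = true → x e = true := by
    intro e he
    simp [hg] at he
    exact he.1
  have hpd := path_degree N p N.s N.t hpne hE hpch hph hpl
  have hpt : ∀ e : V × V, (if g e then (1 : ℤ) else 0)
      = (if x e then 1 else 0) - (if e ∈ p then 1 else 0) := by
    intro e
    by_cases hxe : x e = true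
    · by_cases hmem : e ∈ p <;> simp [hg, hxe, hmem]
    · have hxe' : x e = false := by cases h : x e; rfl; exact absurd h hxe
      have hmem : e ∉ p := fun h => hxe (hpx e h)
      simp [hg, hxe', hmem]
  have hgbal : ∀ v : V,
      ((∑ z ∈ Finset.univ.filter (fun z : V => N.E v z),
          (if g (v, z) then (1 : ℤ) else 0))
        - ∑ z ∈ Finset.univ.filter (fun z : V => N.E z v),
          (if g (z, v) then (1 : ℤ) else 0)) = 0 := by
    intro v
    simp only [hpt]
    rw [Finset.sum_sub_distrib, Finset.sum_sub_distrib]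
    have h1 := hbal v
    have h2 := hpd v
    omega
  have hnog := no_circulation N g (fun e he => hx e (hgx e he)) hgbal
  intro e
  constructor
  · intro hxe
    by_contra hmem
    have : g e = true := by simp [hg, hxe, hmem]
    rw [hnog e] at this
    exact Bool.false_ne_true this
  · exact hpx e

end ILPmfd

/-- The ILP formulation exactly characterizes flow decompositions: the minimum
flow decomposition size equals the least `k` for which the ILP is feasible. -/
theorem ilp_characterizes_mfd (N : FlowNet V) :
    sInf {k : ℕ | ∃ D, IsFD N D ∧ D.length = k}
      = sInf {k : ℕ | ∃ (x : Fin k → V × V → Bool) (w : Fin k → ℕ),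
          ILPFeasible N k x w} := by
  have hset : {k : ℕ | ∃ D, IsFD N D ∧ D.length = k}
      = {k : ℕ | ∃ (x : Fin k → V × V → Bool) (w : Fin k → ℕ),
          ILPFeasible N k x w} := by
    ext k
    simp only [Set.mem_setOf_eq]
    constructor
    · rintro ⟨D, hFD, rfl⟩
      refine ⟨fun i e => decide (e ∈ (D.get i).1), fun i => (D.get i).2,
        ?_, ?_, ?_, ?_⟩
      · intro i
        exact (hFD.1 (D.get i) (D.get_mem i)).2
      · intro i e he
        simp only [decide_eq_true_eq] at he
        exact (hFD.1 (D.get i) (D.get_mem i)).1.1.2.1 e he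
      · intro i v
        obtain ⟨⟨⟨hne, hE, hch⟩, hh, hl⟩, _⟩ := hFD.1 (D.get i) (D.get_mem i)
        have := ILPmfd.path_degree N (D.get i).1 N.s N.t hne hE hch hh hl v
        simpa using this
      · intro a b hab
        have hsum := hFD.2 a b hab
        have hmap : (D.map (fun pw => if (a, b) ∈ pw.1 then pw.2 else 0)).sum
            = ∑ i : Fin D.length, (if (a, b) ∈ (D.get i).1 then (D.get i).2 else 0) := by
          conv_lhs => rw [← List.ofFn_get D]
          rw [List.map_ofFn, List.sum_ofFn]
          rfl
        rw [hmap] at hsum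
        rw [← hsum]
        push_cast
        apply Finset.sum_congr rfl
        intro i _
        simp only [decide_eq_true_eq]
    · rintro ⟨x, w, hw, hxE, hbal, hf⟩
      choose p hp1 hp2 using fun i => ILPmfd.support_path N (x i) (hxE i) (hbal i)
      refine ⟨List.ofFn (fun i => (p i, w i)), ⟨?_, ?_⟩, by simp⟩
      · intro pw hpw
        rw [List.mem_ofFn] at hpw
        obtain ⟨i, rfl⟩ := hpw
        exact ⟨hp1 i, hw i⟩
      · intro u v huv
        have hfz := hf u v huv
        have hmap : ((List.ofFn (fun i => (p i, w i))).map
              (fun pw => if (u, v) ∈ pw.1 then pw.2 else 0)).sum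
            = ∑ i : Fin k, (if (u, v) ∈ p i then w i else 0) := by
          rw [List.map_ofFn, List.sum_ofFn]
          rfl
        rw [hmap]
        have h2 : ((∑ i : Fin k, if (u, v) ∈ p i then w i else 0 : ℕ) : ℤ)
            = (N.f u v : ℤ) := by
          push_cast
          rw [hfz]
          apply Finset.sum_congr rfl
          intro i _
          by_cases hm : (u, v) ∈ p i
          · rw [if_pos hm, if_pos ((hp2 i (u, v)).mpr hm)]
          · rw [if_neg hm, if_neg (fun h => hm ((hp2 i (u, v)).mp h))]
        exact_mod_cast h2
  rw [hset]
end

section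
/- In a flow network with strictly positive flow on every edge, any subpath of a safe path is safe; equivalently, if the excess flow of P is positive then the excess flow of every subpath P[ℓ..r] of P is also positive. -/
variable {V : Type} [Fintype V] [DecidableEq V]

/-- The excess flow of a path `P = (e₁, …, e_ℓ)` with `e_i = (u_i, u_{i+1})`. -/
def excess (N : FlowNet V) (P : List (V × V)) : ℤ :=
  (P.head?.elim 0 fun e => (N.f e.1 e.2 : ℤ)) -
    (P.tail.dropLast.map fun e =>
      ∑ v ∈ Finset.univ.filter (fun v : V => N.E e.1 v ∧ v ≠ e.2), (N.f e.1 v : ℤ)).sum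

/-- Out-other sum of an edge. -/
private def oo (N : FlowNet V) (e : V × V) : ℤ :=
  ∑ v ∈ Finset.univ.filter (fun v : V => N.E e.1 v ∧ v ≠ e.2), (N.f e.1 v : ℤ)

private lemma oo_nonneg (N : FlowNet V) (e : V × V) : 0 ≤ oo N e :=
  Finset.sum_nonneg fun _ _ => Int.natCast_nonneg _

private lemma excess_eq (N : FlowNet V) (e : V × V) (l : List (V × V)) :
    excess N (e :: l) = (N.f e.1 e.2 : ℤ) - ((l.dropLast).map (oo N)).sum := rfl

private lemma flow_step (N : FlowNet V) {a b c : V} (hab : N.E a b) (hbc : N.E b c) :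
    (N.f a b : ℤ) ≤ (N.f b c : ℤ) + oo N (b, c) := by
  have hbs : b ≠ N.s := fun h => N.s_no_in a (h ▸ hab)
  have hbt : b ≠ N.t := fun h => N.t_no_out c (h ▸ hbc)
  have hcons := N.conservation b hbs hbt
  have hle : N.f a b ≤ ∑ u ∈ Finset.univ.filter (fun u : V => N.E u b), N.f u b :=
    Finset.single_le_sum (f := fun u => N.f u b) (fun _ _ => Nat.zero_le _)
      (Finset.mem_filter.mpr ⟨Finset.mem_univ a, hab⟩)
  have hsplit : Finset.univ.filter (fun w : V => N.E b w)
      = insert c (Finset.univ.filter (fun w : V => N.E b w ∧ w ≠ c)) := by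
    ext w
    simp only [Finset.mem_filter, Finset.mem_univ, true_and, Finset.mem_insert]
    constructor
    · intro h
      by_cases hwc : w = c
      · exact Or.inl hwc
      · exact Or.inr ⟨h, hwc⟩
    · rintro (rfl | ⟨h, _⟩)
      · exact hbc
      · exact h
  have hc : c ∉ Finset.univ.filter (fun w : V => N.E b w ∧ w ≠ c) := by simp
  have hsum : ∑ w ∈ Finset.univ.filter (fun w : V => N.E b w), N.f b w
      = N.f b c + ∑ w ∈ Finset.univ.filter (fun w : V => N.E b w ∧ w ≠ c), N.f b w := by
    rw [hsplit, Finset.sum_insert hc]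
  have : N.f a b ≤ N.f b c + ∑ w ∈ Finset.univ.filter (fun w : V => N.E b w ∧ w ≠ c), N.f b w := by
    omega
  calc (N.f a b : ℤ) ≤ ((N.f b c + ∑ w ∈ Finset.univ.filter (fun w : V => N.E b w ∧ w ≠ c), N.f b w : ℕ) : ℤ) := by
        exact_mod_cast this
    _ = (N.f b c : ℤ) + oo N (b, c) := by
        push_cast [oo]
        rfl

private lemma excess_cons_le (N : FlowNet V) (e : V × V) (R : List (V × V))
    (hlen : 2 ≤ R.length) (hpath : IsPath N (e :: R)) :
    excess N (e :: R) ≤ excess N R := by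
  obtain ⟨x, rest, rfl⟩ : ∃ x rest, R = x :: rest := by
    cases R with
    | nil => simp at hlen
    | cons x rest => exact ⟨x, rest, rfl⟩
  have hrest : rest ≠ [] := by
    cases rest with
    | nil => simp at hlen
    | cons _ _ => simp
  obtain ⟨-, hE, hchain⟩ := hpath
  have hex : e.2 = x.1 := (List.isChain_cons_cons.mp hchain).1
  have hEe : N.E e.1 e.2 := hE e (by simp)
  have hEx : N.E x.1 x.2 := hE x (by simp)
  rw [excess_eq, excess_eq, List.dropLast_cons_of_ne_nil hrest]
  simp only [List.map_cons, List.sum_cons]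
  have hstep : (N.f e.1 e.2 : ℤ) ≤ (N.f x.1 x.2 : ℤ) + oo N x := by
    have := flow_step N (a := e.1) (b := x.1) (c := x.2) (by rw [← hex]; exact hEe) hEx
    rw [hex]
    simpa using this
  linarith

private lemma excess_append_left_le (N : FlowNet V) :
    ∀ (A Q : List (V × V)), 2 ≤ Q.length → IsPath N (A ++ Q) →
      excess N (A ++ Q) ≤ excess N Q := by
  intro A
  induction A with
  | nil => intro Q _ _; simp
  | cons e A' ih =>
    intro Q hQ hpath
    have hlen : 2 ≤ (A' ++ Q).length := by
      rw [List.length_append]; omega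
    have hpath' : IsPath N (A' ++ Q) := by
      obtain ⟨-, hE, hchain⟩ := hpath
      refine ⟨by intro h; rw [h] at hlen; simp at hlen, fun x hx => hE x (by simp [hx]), ?_⟩
      have : List.Chain' (fun e e' : V × V => e.2 = e'.1) (e :: (A' ++ Q)) := hchain
      exact this.tail
    calc excess N (e :: (A' ++ Q)) ≤ excess N (A' ++ Q) :=
          excess_cons_le N e (A' ++ Q) hlen hpath
      _ ≤ excess N Q := ih Q hQ hpath'

private lemma excess_append_right_le (N : FlowNet V) (Q' B : List (V × V)) (hQ' : Q' ≠ []) :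
    excess N (Q' ++ B) ≤ excess N Q' := by
  obtain ⟨q, Q'', rfl⟩ : ∃ q Q'', Q' = q :: Q'' := by
    cases Q' with
    | nil => exact absurd rfl hQ'
    | cons q Q'' => exact ⟨q, Q'', rfl⟩
  rw [List.cons_append, excess_eq, excess_eq]
  have hpre : Q''.dropLast <+: (Q'' ++ B).dropLast := by
    cases B with
    | nil => simp
    | cons b B' =>
      rw [List.dropLast_append_of_ne_nil (by simp)]
      exact (List.dropLast_prefix Q'').trans (List.prefix_append _ _)
  obtain ⟨r, hr⟩ := hpre
  have hsum : (Q''.dropLast.map (oo N)).sum ≤ ((Q'' ++ B).dropLast.map (oo N)).sum := by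
    rw [← hr, List.map_append, List.sum_append]
    have : 0 ≤ (r.map (oo N)).sum :=
      List.sum_nonneg (by
        intro a ha
        obtain ⟨x, -, rfl⟩ := List.mem_map.mp ha
        exact oo_nonneg N x)
    linarith
  linarith

/-- In a positive flow network, any (nonempty) subpath of a safe path is safe;
equivalently, if a path has positive excess flow, so does every nonempty
subpath of it. -/
theorem subpath_of_safe_is_safe (N : FlowNet V) (P : List (V × V))
    (hP : IsPath N P) :
    (Safe N P → ∀ Q, Q ≠ [] → Q <:+: P → Safe N Q) ∧
    (0 < excess N P → ∀ Q, Q ≠ [] → Q <:+: P → 0 < excess N Q) := by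
  constructor
  · intro hSafe Q _ hQP D hD
    obtain ⟨pw, hmem, hinf⟩ := hSafe D hD
    exact ⟨pw, hmem, hQP.trans hinf⟩
  · intro hpos Q hQne hQP
    obtain ⟨A, B, hAB⟩ := hQP
    by_cases hlen : 2 ≤ Q.length
    · have h1 : excess N (A ++ Q ++ B) ≤ excess N (A ++ Q) :=
        excess_append_right_le N (A ++ Q) B (by simp [hQne])
      have hAQpath : IsPath N (A ++ Q) := by
        obtain ⟨-, hE, hchain⟩ := hP
        refine ⟨by simp [hQne], fun x hx => hE x ?_, ?_⟩
        · rw [← hAB]; simp at hx ⊢; tauto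
        · refine List.IsChain.prefix hchain ⟨B, ?_⟩
          rw [← hAB]
      have h2 : excess N (A ++ Q) ≤ excess N Q :=
        excess_append_left_le N A Q hlen hAQpath
      rw [← hAB] at hpos
      linarith
    · obtain ⟨e, rfl⟩ : ∃ e, Q = [e] := by
        cases Q with
        | nil => exact absurd rfl hQne
        | cons e Q' =>
          cases Q' with
          | nil => exact ⟨e, rfl⟩
          | cons _ _ => exact absurd (by simp) hlen
      have he : N.E e.1 e.2 := hP.2.1 e (by rw [← hAB]; simp)
      have := N.f_pos e.1 e.2 he
      rw [excess_eq]
      simp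
      exact_mod_cast this
end
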